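/- arXiv:0707.1962 — 4 statements merged into one kernel-verified Lean document; each statement's English description precedes it below -/
import Mathlib

section
/- For every n ≥ 1, the geodesic between y₁ and y_{4n} in the full set S_{4n} ∪ {z} is the whole set S_{4n} ∪ {z}; i.e., the only full subset of S_{4n} ∪ {z} containing both y₁ and y_{4n} is S_{4n} ∪ {z} itself. In particular, the family {S_{4n} ∪ {z_n}}_{n≥1} has geodesic lengths tending to infinity. -/
open scoped BigOperators

/-- Symbols: x₁,x₂,x₃,x₄ are 0,1,2,3 and αⱼ = j+3 (so all symbols are distinct naturals). -/
def α (j : ℕ) : ℕ := j + 3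

/-- The points y₁, y₂, y₃, … of the paper's construction. -/
def y : ℕ → Fin 4 → ℕ := fun k =>
  if k = 1 then ![0, 1, 2, 3]
  else if k = 2 then ![0, 1, α 1, α 2]
  else match k % 4 with
    | 1 => ![0, α (k - 1), α k, α (k + 1)]
    | 2 => ![α (k - 3), 1, α (k - 1), α k]
    | 3 => ![α k, α (k + 1), 2, α (k - 1)]
    | _ => ![α (k - 1), α k, α (k - 3), 3]

/-- u = (u₁,u₂,u₃,u₄) solves equation (1) for f on S. -/
def Solves (S : Set (Fin 4 → ℕ)) (f : (Fin 4 → ℕ) → ℂ) (u : Fin 4 → ℕ → ℂ) : Prop :=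
  ∀ p ∈ S, f p = ∑ i, u i (p i)

/-- S is good: every complex function on S decomposes into coordinate functions. -/
def IsGood (S : Set (Fin 4 → ℕ)) : Prop := ∀ f, ∃ u, Solves S f u

/-- i-th projection of S. -/
def proj (S : Set (Fin 4 → ℕ)) (i : Fin 4) : Set ℕ := (fun p => p i) '' S

/-- B is a boundary set of S: for every f and every prescription U on B,
equation (1) admits a solution agreeing with U on B, unique on the projections of S. -/
def IsBoundary (S : Set (Fin 4 → ℕ)) (B : Set ℕ) : Prop :=
  B ⊆ ⋃ i, proj S i ∧
  ∀ f : (Fin 4 → ℕ) → ℂ, ∀ U : ℕ → ℂ,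
    (∃ u, Solves S f u ∧ ∀ i, ∀ a ∈ B ∩ proj S i, u i a = U a) ∧
    ∀ u v, Solves S f u → (∀ i, ∀ a ∈ B ∩ proj S i, u i a = U a) →
      Solves S f v → (∀ i, ∀ a ∈ B ∩ proj S i, v i a = U a) →
      ∀ i, ∀ a ∈ proj S i, u i a = v i a

/-- S is full: a maximal good subset of the product of its projections. -/
def IsFull (S : Set (Fin 4 → ℕ)) : Prop :=
  IsGood S ∧ ∀ T : Set (Fin 4 → ℕ), S ⊆ T → (∀ p ∈ T, ∀ i, p i ∈ proj S i) →
    IsGood T → T = S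

/-- Sₙ = {y₁,…,y_N}. -/
def Sn (N : ℕ) : Set (Fin 4 → ℕ) := y '' Set.Icc 1 N

/-- The infinite set S = {y₁, y₂, …}. -/
def Sinf : Set (Fin 4 → ℕ) := y '' Set.Ici 1

/-- The extra point z = zₙ = (α_{4n−1}, x₂, α_{4n−3}, x₄). -/
def z (n : ℕ) : Fin 4 → ℕ := ![α (4 * n - 1), 1, α (4 * n - 3), 3]

/-- Two points of S are related iff some finite full subset of S contains both. -/
def Related (S : Set (Fin 4 → ℕ)) (p q : Fin 4 → ℕ) : Prop :=
  ∃ K, K ⊆ S ∧ K.Finite ∧ IsFull K ∧ p ∈ K ∧ q ∈ K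

/-- The 4n×4n incidence matrix A_{4n}: rows y₂,…,y_{4n},zₙ; columns α₁,…,α_{4n}. -/
def A (n : ℕ) : Matrix (Fin (4 * n)) (Fin (4 * n)) ℚ :=
  Matrix.of fun i j =>
    if ∃ k, (if (i : ℕ) = 4 * n - 1 then z n else y ((i : ℕ) + 2)) k = (j : ℕ) + 4
    then 1 else 0

/-!
If `K` is full and a point `p ∉ K` lies in the product of the projections of `K`, then
`K ∪ {p}` is not good, so every coordinate sum `u ↦ ∑ i, u i (p i)` vanishing on `K` vanishes
at `p`. As `K` is good, this makes the coordinate sum at `p` a combination `∑ C q • (…)` of those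
at the points `q ∈ K`, and testing on the indicator of a single symbol in a single coordinate
gives one linear equation in the `C q` per (coordinate, symbol).

Both `z` and `p⋆ = (x₁, x₂, α_{4n-3}, x₄)` lie in the product of the projections of
`{y₁, y_{4n}}`, and `p⋆ ∉ S_{4n} ∪ {z}`. For `p = z` the equations at `α_{4n-1}` and `α_{4n}`
give `C z = 1`, while `C z = 0` if `z ∉ K`. For `p = p⋆` they give `C y_{4n-1} = -1/2`, and
block by block `C y_{4t+7} = 4 C y_{4t+3}`, every other `C y_k` being a nonzero multiple of
some `C y_{4t+3}` or equal to `C y_{4n} = 1/2`. So all coefficients are nonzero and every `y_k`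
lies in `K`.
-/

def coordSum (p : Fin 4 → ℕ) : (Fin 4 → ℕ → ℂ) →ₗ[ℂ] ℂ :=
  ∑ i, (LinearMap.proj (p i) : (ℕ → ℂ) →ₗ[ℂ] ℂ) ∘ₗ LinearMap.proj i

lemma coordSum_apply (p : Fin 4 → ℕ) (u : Fin 4 → ℕ → ℂ) :
    coordSum p u = ∑ i, u i (p i) := by
  simp [coordSum]

lemma coordSum_single (q : Fin 4 → ℕ) (i : Fin 4) (a : ℕ) :
    coordSum q (Pi.single i (Pi.single a 1)) = if q i = a then 1 else 0 := by
  rw [coordSum_apply, Finset.sum_eq_single i (fun j _ hj => by simp [hj]) (by simp)]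
  simp [Pi.single_apply]

lemma solves_iff {S : Set (Fin 4 → ℕ)} {f : (Fin 4 → ℕ) → ℂ} {u : Fin 4 → ℕ → ℂ} :
    Solves S f u ↔ ∀ p ∈ S, f p = coordSum p u := by
  simp only [Solves, coordSum_apply]

section Good

variable {K : Set (Fin 4 → ℕ)} {p : Fin 4 → ℕ}

lemma IsGood.insert (hK : IsGood K) {u : Fin 4 → ℕ → ℂ} (hu : ∀ q ∈ K, coordSum q u = 0)
    (hp : coordSum p u ≠ 0) : IsGood (insert p K) := by
  intro f
  obtain ⟨u₀, hu₀⟩ := hK f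
  rw [solves_iff] at hu₀
  refine ⟨u₀ + ((f p - coordSum p u₀) / coordSum p u) • u, solves_iff.2 ?_⟩
  rintro q (rfl | hq)
  · simp [div_mul_cancel₀ _ hp]
  · simp [hu q hq, hu₀ q hq]

lemma IsFull.coordSum_eq_zero (hK : IsFull K) (hp : p ∉ K) (hproj : ∀ i, p i ∈ proj K i)
    {u : Fin 4 → ℕ → ℂ} (hu : ∀ q ∈ K, coordSum q u = 0) : coordSum p u = 0 := by
  by_contra hne
  refine hp (hK.2 _ (Set.subset_insert p K) ?_ (hK.1.insert hu hne) ▸ Set.mem_insert p K)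
  rintro q (rfl | hq) i
  exacts [hproj i, ⟨q, hq, rfl⟩]

lemma IsGood.exists_coordSum_eq_sum (hK : IsGood K) {W : Finset (Fin 4 → ℕ)} (hKW : K ⊆ W)
    (hp : ∀ u, (∀ q ∈ K, coordSum q u = 0) → coordSum p u = 0) :
    ∃ C : (Fin 4 → ℕ) → ℂ, (∀ q ∉ K, C q = 0) ∧
      ∀ u, coordSum p u = ∑ q ∈ W, C q * coordSum q u := by
  classical
  choose w hw using fun q : Fin 4 → ℕ => hK fun r => if r = q then 1 else 0
  simp only [solves_iff] at hw
  refine ⟨fun q => if q ∈ K then coordSum p (w q) else 0, fun q hq => if_neg hq, fun u => ?_⟩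
  -- `v` agrees with `u` on `K`, hence at `p`
  set v := ∑ q ∈ W, (if q ∈ K then coordSum q u else 0) • w q
  have hv : ∀ r ∈ K, coordSum r v = coordSum r u := by
    intro r hr
    simp only [v, map_sum, map_smul, ← hw _ r hr, smul_eq_mul, mul_ite, mul_one, mul_zero]
    rw [Finset.sum_ite_eq W r, if_pos (show r ∈ W from hKW hr), if_pos hr]
  have hpv := hp (u - v) fun q hq => by rw [map_sub, hv q hq, sub_self]
  rw [map_sub, sub_eq_zero] at hpv
  rw [hpv]
  simp only [v, map_sum, map_smul, smul_eq_mul]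
  exact Finset.sum_congr rfl fun q _ => by split_ifs <;> ring

lemma IsFull.exists_incidence_eq_sum (hK : IsFull K) {W : Finset (Fin 4 → ℕ)} (hKW : K ⊆ W)
    (hp : p ∉ K) (hproj : ∀ i, p i ∈ proj K i) :
    ∃ C : (Fin 4 → ℕ) → ℂ, (∀ q ∉ K, C q = 0) ∧ ∀ i a,
      (if p i = a then 1 else 0) = ∑ q ∈ W, C q * if q i = a then 1 else 0 := by
  obtain ⟨C, hCK, hC⟩ :=
    hK.1.exists_coordSum_eq_sum hKW fun u hu => hK.coordSum_eq_zero hp hproj hu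
  refine ⟨C, hCK, fun i a => ?_⟩
  simpa only [coordSum_single] using hC (Pi.single i (Pi.single a 1))

lemma mem_proj_of_forall_eq_or_eq {a b : Fin 4 → ℕ} (ha : a ∈ K) (hb : b ∈ K)
    (hp : ∀ i, p i = a i ∨ p i = b i) (i : Fin 4) : p i ∈ proj K i := by
  rcases hp i with h | h
  exacts [⟨a, ha, h.symm⟩, ⟨b, hb, h.symm⟩]

end Good

lemma y_cases (k : ℕ) :
    (k = 1 ∧ y k = ![0, 1, 2, 3]) ∨ (k = 2 ∧ y k = ![0, 1, α 1, α 2]) ∨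
    (3 ≤ k ∧ k % 4 = 1 ∧ y k = ![0, α (k - 1), α k, α (k + 1)]) ∨
    (3 ≤ k ∧ k % 4 = 2 ∧ y k = ![α (k - 3), 1, α (k - 1), α k]) ∨
    (k % 4 = 3 ∧ y k = ![α k, α (k + 1), 2, α (k - 1)]) ∨
    (k % 4 = 0 ∧ y k = ![α (k - 1), α k, α (k - 3), 3]) := by
  by_cases h1 : k = 1
  · simp [h1, y]
  by_cases h2 : k = 2
  · simp [h2, y]
  have : k % 4 = 0 ∨ k % 4 = 1 ∨ k % 4 = 2 ∨ k % 4 = 3 := by omega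
  rcases this with h | h | h | h <;> simp [y, h1, h2, h] <;> omega

lemma y_one : y 1 = ![0, 1, 2, 3] := rfl

lemma y_four_mul (n : ℕ) : y (4 * n) = ![α (4 * n - 1), α (4 * n), α (4 * n - 3), 3] := by
  simp [y, show 4 * n ≠ 1 by omega, show 4 * n ≠ 2 by omega]

lemma y_apply_zero_eq_α_iff {k j : ℕ} (hj : 1 ≤ j) :
    y k 0 = α j ↔ (k % 4 = 3 ∧ k = j) ∨ (k % 4 = 0 ∧ k = j + 1) ∨
      (k % 4 = 2 ∧ 6 ≤ k ∧ k = j + 3) := by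
  rcases y_cases k with ⟨rfl, h⟩ | ⟨rfl, h⟩ | ⟨hk, hr, h⟩ | ⟨hk, hr, h⟩ | ⟨hr, h⟩ | ⟨hr, h⟩ <;>
    simp only [h, α, Matrix.cons_val, true_and] <;> omega

lemma y_apply_one_eq_α_iff {k j : ℕ} (hj : 1 ≤ j) :
    y k 1 = α j ↔ (k % 4 = 1 ∧ 5 ≤ k ∧ k = j + 1) ∨ (k % 4 = 3 ∧ k + 1 = j) ∨
      (k % 4 = 0 ∧ k = j) := by
  rcases y_cases k with ⟨rfl, h⟩ | ⟨rfl, h⟩ | ⟨hk, hr, h⟩ | ⟨hk, hr, h⟩ | ⟨hr, h⟩ | ⟨hr, h⟩ <;>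
    simp only [h, α, Matrix.cons_val, true_and] <;> omega

lemma y_apply_two_eq_α_iff {k j : ℕ} (hj : 1 ≤ j) :
    y k 2 = α j ↔ (k = 2 ∧ j = 1) ∨ (k % 4 = 1 ∧ 5 ≤ k ∧ k = j) ∨
      (k % 4 = 2 ∧ 6 ≤ k ∧ k = j + 1) ∨ (k % 4 = 0 ∧ k = j + 3) := by
  rcases y_cases k with ⟨rfl, h⟩ | ⟨rfl, h⟩ | ⟨hk, hr, h⟩ | ⟨hk, hr, h⟩ | ⟨hr, h⟩ | ⟨hr, h⟩ <;>
    simp only [h, α, Matrix.cons_val, true_and] <;> omega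

lemma y_apply_three_eq_α_iff {k j : ℕ} (hj : 1 ≤ j) :
    y k 3 = α j ↔ (k = 2 ∧ j = 2) ∨ (k % 4 = 1 ∧ 5 ≤ k ∧ k + 1 = j) ∨
      (k % 4 = 2 ∧ 6 ≤ k ∧ k = j) ∨ (k % 4 = 3 ∧ k = j + 1) := by
  rcases y_cases k with ⟨rfl, h⟩ | ⟨rfl, h⟩ | ⟨hk, hr, h⟩ | ⟨hk, hr, h⟩ | ⟨hr, h⟩ | ⟨hr, h⟩ <;>
    simp only [h, α, Matrix.cons_val, true_and] <;> omega

lemma y_injOn : Set.InjOn y (Set.Ici 1) := by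
  intro k hk l hl hkl
  have h0 := congrFun hkl 0
  have h1 := congrFun hkl 1
  have h2 := congrFun hkl 2
  have h3 := congrFun hkl 3
  simp only [Set.mem_Ici] at hk hl
  rcases y_cases k with ⟨rfl, h⟩ | ⟨rfl, h⟩ | ⟨-, hr, h⟩ | ⟨-, hr, h⟩ | ⟨hr, h⟩ | ⟨hr, h⟩ <;>
  rcases y_cases l with ⟨rfl, h'⟩ | ⟨rfl, h'⟩ | ⟨-, hr', h'⟩ | ⟨-, hr', h'⟩ | ⟨hr', h'⟩ |
    ⟨hr', h'⟩ <;>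
    simp only [h, h', α, Matrix.cons_val] at h0 h1 h2 h3 <;> omega

lemma y_ne_z (n : ℕ) {k : ℕ} (hk : 1 ≤ k) : y k ≠ z n := by
  intro h
  have h0 := congrFun h 0
  have h1 := congrFun h 1
  have h3 := congrFun h 3
  rcases y_cases k with ⟨rfl, h⟩ | ⟨rfl, h⟩ | ⟨-, hr, h⟩ | ⟨-, hr, h⟩ | ⟨hr, h⟩ | ⟨hr, h⟩ <;>
    simp only [h, z, α, Matrix.cons_val] at h0 h1 h3 <;> omega

def pStar (n : ℕ) : Fin 4 → ℕ := ![0, 1, α (4 * n - 3), 3]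

lemma pStar_notMem (n : ℕ) : pStar n ∉ Sn (4 * n) ∪ {z n} := by
  rintro (⟨k, -, hk⟩ | hz)
  · have h0 := congrFun hk 0
    have h1 := congrFun hk 1
    have h2 := congrFun hk 2
    have h3 := congrFun hk 3
    rcases y_cases k with ⟨rfl, h⟩ | ⟨rfl, h⟩ | ⟨-, hr, h⟩ | ⟨-, hr, h⟩ | ⟨hr, h⟩ | ⟨hr, h⟩ <;>
      simp only [h, pStar, α, Matrix.cons_val] at h0 h1 h2 h3 <;> omega
  · simpa [pStar, z, α] using congrFun hz 0

def snUnionZ (n : ℕ) : Finset (Fin 4 → ℕ) := (Finset.Icc 1 (4 * n)).image y ∪ {z n}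

lemma coe_snUnionZ (n : ℕ) : (snUnionZ n : Set (Fin 4 → ℕ)) = Sn (4 * n) ∪ {z n} := by
  simp [snUnionZ, Sn]

lemma sum_snUnionZ {M : Type*} [AddCommMonoid M] (n : ℕ) (g : (Fin 4 → ℕ) → M) :
    ∑ q ∈ snUnionZ n, g q = ∑ k ∈ Finset.Icc 1 (4 * n), g (y k) + g (z n) := by
  rw [snUnionZ, Finset.sum_union, Finset.sum_image, Finset.sum_singleton]
  · exact fun k hk l hl => y_injOn (Finset.mem_Icc.1 hk).1 (Finset.mem_Icc.1 hl).1
  · simp only [Finset.disjoint_singleton_right, Finset.mem_image, Finset.mem_Icc, not_exists,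
      not_and]
    exact fun k hk => y_ne_z n hk.1

lemma ncard_Sn_union_z (n : ℕ) : (Sn (4 * n) ∪ {z n}).ncard = 4 * n + 1 := by
  rw [← coe_snUnionZ, Set.ncard_coe_finset, Finset.card_eq_sum_ones, sum_snUnionZ]
  simp

def IsIncidenceRelation (n : ℕ) (p : Fin 4 → ℕ) (C : (Fin 4 → ℕ) → ℂ) : Prop :=
  ∀ i a, (if p i = a then 1 else 0) =
    ∑ k ∈ Finset.Icc 1 (4 * n), C (y k) * (if y k i = a then 1 else 0) +
      C (z n) * if z n i = a then 1 else 0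

lemma IsFull.exists_isIncidenceRelation {n : ℕ} {K : Set (Fin 4 → ℕ)} (hK : IsFull K)
    (hKW : K ⊆ Sn (4 * n) ∪ {z n}) {p : Fin 4 → ℕ} (hp : p ∉ K)
    (hproj : ∀ i, p i ∈ proj K i) :
    ∃ C, (∀ q ∉ K, C q = 0) ∧ IsIncidenceRelation n p C := by
  rw [← coe_snUnionZ] at hKW
  obtain ⟨C, hCK, hC⟩ := hK.exists_incidence_eq_sum hKW hp hproj
  exact ⟨C, hCK, fun i a => by rw [hC, sum_snUnionZ]⟩

namespace IsIncidenceRelation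

variable {n : ℕ} {p : Fin 4 → ℕ} {C : (Fin 4 → ℕ) → ℂ}

lemma column (h : IsIncidenceRelation n p C) (i : Fin 4) (a : ℕ) (s : Finset ℕ)
    (hs : ∀ k, (1 ≤ k ∧ k ≤ 4 * n) ∧ y k i = a ↔ k ∈ s) :
    (if p i = a then 1 else 0) = ∑ k ∈ s, C (y k) + if z n i = a then C (z n) else 0 := by
  rw [h i a, mul_boole]
  simp_rw [mul_boole]
  rw [← Finset.sum_filter]
  congr 2
  ext k
  rw [Finset.mem_filter, Finset.mem_Icc, hs]

lemma top_zero (h : IsIncidenceRelation n p C) (hn : 1 ≤ n) :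
    (if p 0 = α (4 * n - 1) then 1 else 0) = C (y (4 * n - 1)) + C (y (4 * n)) + C (z n) := by
  rw [h.column 0 _ {4 * n - 1, 4 * n} fun k => by
      rw [y_apply_zero_eq_α_iff (by omega), Finset.mem_insert, Finset.mem_singleton]; omega,
    if_pos (show z n 0 = α (4 * n - 1) from rfl), Finset.sum_pair (by omega)]

lemma top_one (h : IsIncidenceRelation n p C) (hn : 1 ≤ n) :
    (if p 1 = α (4 * n) then 1 else 0) = C (y (4 * n - 1)) + C (y (4 * n)) := by
  rw [h.column 1 _ {4 * n - 1, 4 * n} fun k => by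
      rw [y_apply_one_eq_α_iff (by omega), Finset.mem_insert, Finset.mem_singleton]; omega,
    if_neg (show z n 1 ≠ α (4 * n) by simp [z, α]), Finset.sum_pair (by omega), add_zero]

lemma two_sub_three (h : IsIncidenceRelation n p C) {t : ℕ} (ht : t < n) :
    C (y (4 * t + 4)) - C (y (4 * t + 3)) + (if t + 1 = n then C (z n) else 0) =
      (if p 2 = α (4 * t + 1) then 1 else 0) - (if p 3 = α (4 * t + 2) then 1 else 0) := by
  -- `S = {4t+1, 4t+2}`, except `S = {2}` for `t = 0`: `y₂` plays the part of both
  set S := (Finset.Icc (4 * t + 1) (4 * t + 2)).filter (2 ≤ ·)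
  have h2 := h.column 2 (α (4 * t + 1)) (insert (4 * t + 4) S) fun k => by
    rw [y_apply_two_eq_α_iff (by omega), Finset.mem_insert, Finset.mem_filter, Finset.mem_Icc]
    omega
  have h3 := h.column 3 (α (4 * t + 2)) (insert (4 * t + 3) S) fun k => by
    rw [y_apply_three_eq_α_iff (by omega), Finset.mem_insert, Finset.mem_filter, Finset.mem_Icc]
    omega
  have hz2 : z n 2 = α (4 * t + 1) ↔ t + 1 = n := by
    simp only [z, α, Matrix.cons_val]; omega
  rw [Finset.sum_insert (by simp [S])] at h2
  simp only [hz2] at h2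
  rw [Finset.sum_insert (by simp [S]), if_neg (show z n 3 ≠ α (4 * t + 2) by simp [z, α])] at h3
  linear_combination h3 - h2

lemma pStar_bottom (h : IsIncidenceRelation n (pStar n) C) (hn : 1 ≤ n) :
    C (y 2) + C (y 3) = 0 := by
  have h3 := h.column 3 (α 2) {2, 3} fun k => by
    rw [y_apply_three_eq_α_iff (by omega), Finset.mem_insert, Finset.mem_singleton]; omega
  rwa [if_neg (show pStar n 3 ≠ α 2 by simp [pStar, α]), if_neg (show z n 3 ≠ α 2 by simp [z, α]),
    Finset.sum_pair (by omega), add_zero, eq_comm] at h3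

lemma pStar_top (h : IsIncidenceRelation n (pStar n) C) (hn : 1 ≤ n) :
    C (y (4 * n - 1)) = -1 / 2 ∧ C (y (4 * n)) = 1 / 2 := by
  have h0 := h.top_zero hn
  have h1 := h.top_one hn
  have h23 := h.two_sub_three (t := n - 1) (by omega)
  rw [show 4 * (n - 1) + 4 = 4 * n by omega, show 4 * (n - 1) + 3 = 4 * n - 1 by omega,
    if_pos (by omega), if_pos (show pStar n 2 = α (4 * (n - 1) + 1) by simp [pStar, α]; omega),
    if_neg (show pStar n 3 ≠ α (4 * (n - 1) + 2) by simp [pStar, α])] at h23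
  rw [if_neg (show pStar n 0 ≠ α (4 * n - 1) by simp [pStar, α])] at h0
  rw [if_neg (show pStar n 1 ≠ α (4 * n) by simp [pStar, α])] at h1
  exact ⟨by linear_combination (-h0 - h23) / 2, by linear_combination (h0 - 2 * h1 + h23) / 2⟩

lemma pStar_interior (h : IsIncidenceRelation n (pStar n) C) {t : ℕ} (ht : t + 1 < n) :
    C (y (4 * t + 4)) = C (y (4 * t + 3)) ∧
      C (y (4 * t + 5)) = -2 * C (y (4 * t + 3)) ∧
      C (y (4 * t + 6)) = -2 * C (y (4 * t + 3)) ∧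
      C (y (4 * t + 7)) = 4 * C (y (4 * t + 3)) := by
  have h0 := h.column 0 (α (4 * t + 3)) {4 * t + 3, 4 * t + 4, 4 * t + 6} fun k => by
    rw [y_apply_zero_eq_α_iff (by omega), Finset.mem_insert, Finset.mem_insert,
      Finset.mem_singleton]
    omega
  have h1 := h.column 1 (α (4 * t + 4)) {4 * t + 3, 4 * t + 4, 4 * t + 5} fun k => by
    rw [y_apply_one_eq_α_iff (by omega), Finset.mem_insert, Finset.mem_insert,
      Finset.mem_singleton]
    omega
  have h3 := h.column 3 (α (4 * t + 6)) {4 * t + 5, 4 * t + 6, 4 * t + 7} fun k => by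
    rw [y_apply_three_eq_α_iff (by omega), Finset.mem_insert, Finset.mem_insert,
      Finset.mem_singleton]
    omega
  have h23 := h.two_sub_three (t := t) (by omega)
  rw [Finset.sum_insert (by simp), Finset.sum_pair (by omega),
    if_neg (show pStar n 0 ≠ _ by simp [pStar, α]),
    if_neg (show z n 0 ≠ α (4 * t + 3) by simp [z, α]; omega)] at h0
  rw [Finset.sum_insert (by simp), Finset.sum_pair (by omega),
    if_neg (show pStar n 1 ≠ _ by simp [pStar, α]), if_neg (show z n 1 ≠ _ by simp [z, α])] at h1
  rw [Finset.sum_insert (by simp), Finset.sum_pair (by omega),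
    if_neg (show pStar n 3 ≠ _ by simp [pStar, α]), if_neg (show z n 3 ≠ _ by simp [z, α])] at h3
  rw [if_neg (by omega), if_neg (show pStar n 2 ≠ α (4 * t + 1) by simp [pStar, α]; omega),
    if_neg (show pStar n 3 ≠ _ by simp [pStar, α])] at h23
  exact ⟨by linear_combination h23, by linear_combination -h1 - h23,
    by linear_combination -h0 - h23, by linear_combination h0 + h1 - h3 + 2 * h23⟩

lemma pStar_geometric (h : IsIncidenceRelation n (pStar n) C) {t : ℕ} (ht : t < n) :
    C (y (4 * t + 3)) = 4 ^ t * C (y 3) := by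
  induction t with
  | zero => simp
  | succ t ih =>
    rw [show 4 * (t + 1) + 3 = 4 * t + 7 by ring, (h.pStar_interior ht).2.2.2, ih (by omega),
      pow_succ]
    ring

lemma pStar_coeff_ne_zero (h : IsIncidenceRelation n (pStar n) C) (hn : 1 ≤ n) {k : ℕ}
    (hk2 : 2 ≤ k) (hk : k ≤ 4 * n) : C (y k) ≠ 0 := by
  have hc3 : C (y 3) ≠ 0 := by
    intro h3
    have := h.pStar_geometric (t := n - 1) (by omega)
    rw [show 4 * (n - 1) + 3 = 4 * n - 1 by omega, (h.pStar_top hn).1, h3, mul_zero] at this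
    norm_num at this
  have hd : ∀ t < n, C (y (4 * t + 3)) ≠ 0 := fun t ht => by
    rw [h.pStar_geometric ht]; exact mul_ne_zero (by norm_num) hc3
  obtain rfl | hk3 := eq_or_lt_of_le hk2
  · rw [show C (y 2) = -C (y 3) by linear_combination h.pStar_bottom hn]
    exact neg_ne_zero.2 hc3
  obtain ⟨t, rfl | rfl | rfl | rfl⟩ :
      ∃ t, k = 4 * t + 3 ∨ k = 4 * t + 4 ∨ k = 4 * t + 5 ∨ k = 4 * t + 6 :=
    ⟨(k - 3) / 4, by omega⟩
  · exact hd t (by omega)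
  · obtain ht | ht := Nat.lt_or_ge (t + 1) n
    · rw [(h.pStar_interior ht).1]; exact hd t (by omega)
    · rw [show 4 * t + 4 = 4 * n by omega, (h.pStar_top hn).2]; norm_num
  · rw [(h.pStar_interior (by omega)).2.1]; exact mul_ne_zero (by norm_num) (hd t (by omega))
  · rw [(h.pStar_interior (by omega)).2.2.1]; exact mul_ne_zero (by norm_num) (hd t (by omega))

end IsIncidenceRelation

section

variable {n : ℕ} {K : Set (Fin 4 → ℕ)}

lemma z_mem_of_isFull (hn : 1 ≤ n) (hK : IsFull K) (hKW : K ⊆ Sn (4 * n) ∪ {z n})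
    (h1 : y 1 ∈ K) (h4 : y (4 * n) ∈ K) : z n ∈ K := by
  by_contra hz
  obtain ⟨C, hCK, h⟩ := hK.exists_isIncidenceRelation hKW hz
    (mem_proj_of_forall_eq_or_eq h4 h1 fun i => by fin_cases i <;> simp [z, y_four_mul, y_one])
  have h0 := h.top_zero hn
  have h1 := h.top_one hn
  rw [if_pos (show z n 0 = α (4 * n - 1) from rfl), hCK _ hz] at h0
  rw [if_neg (show z n 1 ≠ α (4 * n) by simp [z, α])] at h1
  exact one_ne_zero (h0.trans (by rw [← h1, add_zero]))

lemma y_mem_of_isFull (hn : 1 ≤ n) (hK : IsFull K) (hKW : K ⊆ Sn (4 * n) ∪ {z n})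
    (h1 : y 1 ∈ K) (h4 : y (4 * n) ∈ K) {k : ℕ} (hk2 : 2 ≤ k) (hk : k ≤ 4 * n) : y k ∈ K := by
  obtain ⟨C, hCK, h⟩ := hK.exists_isIncidenceRelation hKW (fun hp => pStar_notMem n (hKW hp))
    (mem_proj_of_forall_eq_or_eq h4 h1 fun i => by fin_cases i <;> simp [pStar, y_four_mul, y_one])
  by_contra hy
  exact h.pStar_coeff_ne_zero hn hk2 hk (hCK _ hy)

lemma eq_of_isFull (hn : 1 ≤ n) (hK : IsFull K) (hKW : K ⊆ Sn (4 * n) ∪ {z n})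
    (h1 : y 1 ∈ K) (h4 : y (4 * n) ∈ K) : K = Sn (4 * n) ∪ {z n} := by
  refine hKW.antisymm (Set.union_subset ?_ (Set.singleton_subset_iff.2
    (z_mem_of_isFull hn hK hKW h1 h4)))
  rintro _ ⟨k, ⟨hk1, hk⟩, rfl⟩
  obtain rfl | hk2 := eq_or_lt_of_le hk1
  exacts [h1, y_mem_of_isFull hn hK hKW h1 h4 hk2 hk]

end

/-- the geodesic between y₁ and y_{4n} in S_{4n} ∪ {zₙ} is the whole
set: the only full subset containing both is S_{4n} ∪ {zₙ} itself. In particular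
the geodesic lengths in this family tend to infinity. -/
theorem stmt_15 :
    (∀ n : ℕ, 1 ≤ n → ∀ K ⊆ Sn (4 * n) ∪ {z n},
      IsFull K → y 1 ∈ K → y (4 * n) ∈ K → K = Sn (4 * n) ∪ {z n}) ∧
    (∀ N : ℕ, ∃ n : ℕ, 1 ≤ n ∧ ∀ K ⊆ Sn (4 * n) ∪ {z n},
      IsFull K → y 1 ∈ K → y (4 * n) ∈ K → N ≤ K.ncard) := by
  refine ⟨fun n hn K hKW hK h1 h4 => eq_of_isFull hn hK hKW h1 h4,
    fun N => ⟨N + 1, by omega, fun K hKW hK h1 h4 => ?_⟩⟩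
  rw [eq_of_isFull (by omega) hK hKW h1 h4, ncard_Sn_union_z]
  omega
end

section
/- For the sets S_{4n} ∪ {z_n} of the paper's construction, even though geodesic lengths in these sets are unbounded, the following holds: for every n and every f : S_{4n} ∪ {z_n} → ℂ with ‖f‖_∞ ≤ 1, there is a solution (u₁,u₂,u₃,u₄) of (1) with each ‖uᵢ‖_∞ bounded by a constant independent of n. -/
open scoped BigOperators

namespace St16

lemma y3eq (t : ℕ) : y (4*t+3) = ![α (4*t+3), α (4*t+4), 2, α (4*t+2)] := by
  have h1 : 4*t+3 ≠ 1 := by omega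
  have h2 : 4*t+3 ≠ 2 := by omega
  have hm : (4*t+3) % 4 = 3 := by omega
  have ha : 4*t+3+1 = 4*t+4 := by omega
  have hb : 4*t+3-1 = 4*t+2 := by omega
  simp only [y, if_neg h1, if_neg h2, hm, ha, hb]

lemma y4eq (t : ℕ) : y (4*t+4) = ![α (4*t+3), α (4*t+4), α (4*t+1), 3] := by
  have h1 : 4*t+4 ≠ 1 := by omega
  have h2 : 4*t+4 ≠ 2 := by omega
  have hm : (4*t+4) % 4 = 0 := by omega
  have ha : 4*t+4-1 = 4*t+3 := by omega
  have hb : 4*t+4-3 = 4*t+1 := by omega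
  simp only [y, if_neg h1, if_neg h2, hm, ha, hb]

lemma y5eq (s : ℕ) : y (4*s+5) = ![0, α (4*s+4), α (4*s+5), α (4*s+6)] := by
  have h1 : 4*s+5 ≠ 1 := by omega
  have h2 : 4*s+5 ≠ 2 := by omega
  have hm : (4*s+5) % 4 = 1 := by omega
  have ha : 4*s+5-1 = 4*s+4 := by omega
  have hb : 4*s+5+1 = 4*s+6 := by omega
  simp only [y, if_neg h1, if_neg h2, hm, ha, hb]

lemma y6eq (s : ℕ) : y (4*s+6) = ![α (4*s+3), 1, α (4*s+5), α (4*s+6)] := by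
  have h1 : 4*s+6 ≠ 1 := by omega
  have h2 : 4*s+6 ≠ 2 := by omega
  have hm : (4*s+6) % 4 = 2 := by omega
  have ha : 4*s+6-3 = 4*s+3 := by omega
  have hb : 4*s+6-1 = 4*s+5 := by omega
  simp only [y, if_neg h1, if_neg h2, hm, ha, hb]

noncomputable def Cc (f : (Fin 4 → ℕ) → ℂ) : ℂ := f (y 1) / 4

noncomputable def Dd (f : (Fin 4 → ℕ) → ℂ) (t : ℕ) : ℂ := f (y (4*t+3)) - f (y (4*t+4))
noncomputable def Ee (f : (Fin 4 → ℕ) → ℂ) (t : ℕ) : ℂ := f (y (4*t+5)) - f (y (4*t+6))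

noncomputable def Tt (f : (Fin 4 → ℕ) → ℂ) : ℕ → ℂ
  | 0 => f (y 3) - Cc f - ((f (y 2) - 2 * Cc f) + (f (y 3) - f (y 4))) / 2
  | t+1 => f (y (4*t+7)) - Cc f -
      ((f (y (4*t+5)) - Cc f - (Tt f t + (f (y (4*t+5)) - f (y (4*t+6)))) / 2)
        + (f (y (4*t+7)) - f (y (4*t+8)))) / 2

noncomputable def Svv (f : (Fin 4 → ℕ) → ℂ) : ℕ → ℂ
  | 0 => f (y 2) - 2 * Cc f
  | t+1 => f (y (4*t+5)) - Cc f - (Tt f t + (f (y (4*t+5)) - f (y (4*t+6)))) / 2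

lemma Tt_spec (f : (Fin 4 → ℕ) → ℂ) (t : ℕ) :
    Tt f t = f (y (4*t+3)) - Cc f - (Svv f t + Dd f t) / 2 := by
  cases t with
  | zero => simp [Tt, Svv, Dd]
  | succ t =>
      have h1 : 4*(t+1)+3 = 4*t+7 := by omega
      have h2 : 4*(t+1)+4 = 4*t+8 := by omega
      simp only [Tt, Svv, Dd, h1, h2]

noncomputable def bb (n : ℕ) (f : (Fin 4 → ℕ) → ℂ) (j : ℕ) : ℂ :=
  let t := (j-1)/4
  if (j-1) % 4 = 0 then (Svv f t - Dd f t)/2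
  else if (j-1) % 4 = 1 then (Svv f t + Dd f t)/2
  else if (j-1) % 4 = 2 then
    (if t+1 < n then (Tt f t - Ee f t)/2 else f (z n) - 2*Cc f - (Svv f t - Dd f t)/2)
  else (if t+1 < n then (Tt f t + Ee f t)/2
        else Tt f t - (f (z n) - 2*Cc f - (Svv f t - Dd f t)/2))

variable (n : ℕ) (f : (Fin 4 → ℕ) → ℂ)

lemma bb1 (t : ℕ) : bb n f (4*t+1) = (Svv f t - Dd f t)/2 := by
  have h1 : (4*t+1-1)/4 = t := by omega
  have h2 : (4*t+1-1) % 4 = 0 := by omega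
  simp only [bb, h1, h2]; norm_num

lemma bb2 (t : ℕ) : bb n f (4*t+2) = (Svv f t + Dd f t)/2 := by
  have h1 : (4*t+2-1)/4 = t := by omega
  have h2 : (4*t+2-1) % 4 = 1 := by omega
  simp only [bb, h1, h2]; norm_num

lemma bb3 (t : ℕ) (h : t+1 < n) : bb n f (4*t+3) = (Tt f t - Ee f t)/2 := by
  have h1 : (4*t+3-1)/4 = t := by omega
  have h2 : (4*t+3-1) % 4 = 2 := by omega
  simp only [bb, h1, h2]; norm_num [if_pos h]

lemma bb3e (t : ℕ) (h : ¬ t+1 < n) :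
    bb n f (4*t+3) = f (z n) - 2*Cc f - (Svv f t - Dd f t)/2 := by
  have h1 : (4*t+3-1)/4 = t := by omega
  have h2 : (4*t+3-1) % 4 = 2 := by omega
  simp only [bb, h1, h2]; norm_num [if_neg h]

lemma bb4 (t : ℕ) (h : t+1 < n) : bb n f (4*t+4) = (Tt f t + Ee f t)/2 := by
  have h1 : (4*t+4-1)/4 = t := by omega
  have h2 : (4*t+4-1) % 4 = 3 := by omega
  simp only [bb, h1, h2]; norm_num [if_pos h]

lemma bb4e (t : ℕ) (h : ¬ t+1 < n) :
    bb n f (4*t+4) = Tt f t - (f (z n) - 2*Cc f - (Svv f t - Dd f t)/2) := by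
  have h1 : (4*t+4-1)/4 = t := by omega
  have h2 : (4*t+4-1) % 4 = 3 := by omega
  simp only [bb, h1, h2]; norm_num [if_neg h]

lemma bb34 (t : ℕ) : bb n f (4*t+3) + bb n f (4*t+4) = Tt f t := by
  by_cases h : t+1 < n
  · rw [bb3 n f t h, bb4 n f t h]; ring
  · rw [bb3e n f t h, bb4e n f t h]; ring

noncomputable def uu (n : ℕ) (f : (Fin 4 → ℕ) → ℂ) : Fin 4 → ℕ → ℂ :=
  fun _ a => if a ≤ 3 then Cc f else bb n f (a-3)

lemma uu_α (i : Fin 4) (j : ℕ) (h : 1 ≤ j) : uu n f i (α j) = bb n f j := by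
  have h1 : ¬ (α j ≤ 3) := by simp [α]; omega
  have h2 : α j - 3 = j := by simp [α]
  simp only [uu, if_neg h1, h2]

lemma uu_x (i : Fin 4) (a : ℕ) (h : a ≤ 3) : uu n f i a = Cc f := by
  simp only [uu, if_pos h]

lemma solves_main (hn : 1 ≤ n) : Solves (Sn (4*n) ∪ {z n}) f (uu n f) := by
  intro p hp
  rcases hp with hp | hp
  · obtain ⟨k, ⟨hk1, hk2⟩, rfl⟩ := hp
    rw [Fin.sum_univ_four]
    obtain ⟨t, r, hr, hk⟩ : ∃ t r, r < 4 ∧ k = 4*t+r :=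
      ⟨k/4, k%4, Nat.mod_lt _ (by norm_num), (Nat.div_add_mod k 4).symm⟩
    interval_cases r
    · -- k = 4t = 4s+4
      obtain ⟨s, rfl⟩ : ∃ s, t = s + 1 := ⟨t-1, by omega⟩
      rw [show 4*(s+1) + 0 = 4*s+4 from by ring] at hk
      subst hk
      have e0 : y (4*s+4) 0 = α (4*s+3) := by rw [y4eq]; rfl
      have e1 : y (4*s+4) 1 = α (4*s+4) := by rw [y4eq]; rfl
      have e2 : y (4*s+4) 2 = α (4*s+1) := by rw [y4eq]; rfl
      have e3 : y (4*s+4) 3 = 3 := by rw [y4eq]; rfl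
      rw [e0, e1, e2, e3, uu_α n f _ _ (by omega), uu_α n f _ _ (by omega),
        uu_α n f _ _ (by omega), uu_x n f _ _ (by omega), bb34, bb1, Tt_spec]
      simp only [Dd]; ring
    · rcases Nat.eq_zero_or_pos t with rfl | ht
      · -- k = 1
        rw [show 4*0+1 = 1 from rfl] at hk; subst hk
        have e0 : y 1 0 = 0 := by norm_num [y]
        have e1 : y 1 1 = 1 := by norm_num [y]
        have e2 : y 1 2 = 2 := by norm_num [y]; rfl
        have e3 : y 1 3 = 3 := by norm_num [y]; rfl
        rw [e0, e1, e2, e3, uu_x n f _ _ (by norm_num), uu_x n f _ _ (by norm_num),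
          uu_x n f _ _ (by norm_num), uu_x n f _ _ (by norm_num)]
        simp only [Cc]; ring
      · -- k = 4s+5
        obtain ⟨s, rfl⟩ : ∃ s, t = s + 1 := ⟨t-1, by omega⟩
        rw [show 4*(s+1) + 1 = 4*s+5 from by ring] at hk
        subst hk
        have e0 : y (4*s+5) 0 = 0 := by rw [y5eq]; rfl
        have e1 : y (4*s+5) 1 = α (4*s+4) := by rw [y5eq]; rfl
        have e2 : y (4*s+5) 2 = α (4*s+5) := by rw [y5eq]; rfl
        have e3 : y (4*s+5) 3 = α (4*s+6) := by rw [y5eq]; rfl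
        have hsn : s + 1 < n := by omega
        have hb5 : bb n f (4*s+5) = (Svv f (s+1) - Dd f (s+1))/2 := by
          have h := bb1 n f (s+1); rwa [show 4*(s+1)+1 = 4*s+5 from by ring] at h
        have hb6 : bb n f (4*s+6) = (Svv f (s+1) + Dd f (s+1))/2 := by
          have h := bb2 n f (s+1); rwa [show 4*(s+1)+2 = 4*s+6 from by ring] at h
        rw [e0, e1, e2, e3, uu_x n f _ _ (by norm_num), uu_α n f _ _ (by omega),
          uu_α n f _ _ (by omega), uu_α n f _ _ (by omega), bb4 n f s hsn, hb5, hb6]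
        simp only [Svv, Ee]; ring
    · rcases Nat.eq_zero_or_pos t with rfl | ht
      · -- k = 2
        rw [show 4*0+2 = 2 from rfl] at hk; subst hk
        have e0 : y 2 0 = 0 := by norm_num [y]
        have e1 : y 2 1 = 1 := by norm_num [y]
        have e2 : y 2 2 = α 1 := by norm_num [y]; rfl
        have e3 : y 2 3 = α 2 := by norm_num [y]; rfl
        have hb1' : bb n f 1 = (Svv f 0 - Dd f 0)/2 := by
          have h := bb1 n f 0; rwa [show 4*0+1 = 1 from rfl] at h
        have hb2' : bb n f 2 = (Svv f 0 + Dd f 0)/2 := by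
          have h := bb2 n f 0; rwa [show 4*0+2 = 2 from rfl] at h
        rw [e0, e1, e2, e3, uu_x n f _ _ (by norm_num), uu_x n f _ _ (by norm_num),
          uu_α n f _ _ (by omega), uu_α n f _ _ (by omega), hb1', hb2']
        simp only [Svv]; ring
      · -- k = 4s+6
        obtain ⟨s, rfl⟩ : ∃ s, t = s + 1 := ⟨t-1, by omega⟩
        rw [show 4*(s+1) + 2 = 4*s+6 from by ring] at hk
        subst hk
        have e0 : y (4*s+6) 0 = α (4*s+3) := by rw [y6eq]; rfl
        have e1 : y (4*s+6) 1 = 1 := by rw [y6eq]; rfl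
        have e2 : y (4*s+6) 2 = α (4*s+5) := by rw [y6eq]; rfl
        have e3 : y (4*s+6) 3 = α (4*s+6) := by rw [y6eq]; rfl
        have hsn : s + 1 < n := by omega
        have hb5 : bb n f (4*s+5) = (Svv f (s+1) - Dd f (s+1))/2 := by
          have h := bb1 n f (s+1); rwa [show 4*(s+1)+1 = 4*s+5 from by ring] at h
        have hb6 : bb n f (4*s+6) = (Svv f (s+1) + Dd f (s+1))/2 := by
          have h := bb2 n f (s+1); rwa [show 4*(s+1)+2 = 4*s+6 from by ring] at h
        rw [e0, e1, e2, e3, uu_α n f _ _ (by omega), uu_x n f _ _ (by norm_num),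
          uu_α n f _ _ (by omega), uu_α n f _ _ (by omega), bb3 n f s hsn, hb5, hb6]
        simp only [Svv, Ee]; ring
    · -- k = 4t+3
      subst hk
      have e0 : y (4*t+3) 0 = α (4*t+3) := by rw [y3eq]; rfl
      have e1 : y (4*t+3) 1 = α (4*t+4) := by rw [y3eq]; rfl
      have e2 : y (4*t+3) 2 = 2 := by rw [y3eq]; rfl
      have e3 : y (4*t+3) 3 = α (4*t+2) := by rw [y3eq]; rfl
      rw [e0, e1, e2, e3, uu_α n f _ _ (by omega), uu_α n f _ _ (by omega),
        uu_x n f _ _ (by norm_num), uu_α n f _ _ (by omega), bb2]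
      have h34 := bb34 n f t
      rw [Tt_spec] at h34
      linear_combination -h34
  · -- p = z n
    have hp' : p = z n := hp
    subst hp'
    obtain ⟨t, rfl⟩ : ∃ t, n = t + 1 := ⟨n-1, by omega⟩
    rw [Fin.sum_univ_four]
    have hz : z (t+1) = ![α (4*t+3), 1, α (4*t+1), 3] := by
      have h1 : 4*(t+1)-1 = 4*t+3 := by omega
      have h2 : 4*(t+1)-3 = 4*t+1 := by omega
      simp only [z, h1, h2]
    have e0 : z (t+1) 0 = α (4*t+3) := by rw [hz]; rfl
    have e1 : z (t+1) 1 = 1 := by rw [hz]; rfl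
    have e2 : z (t+1) 2 = α (4*t+1) := by rw [hz]; rfl
    have e3 : z (t+1) 3 = 3 := by rw [hz]; rfl
    rw [e0, e1, e2, e3, uu_α _ f _ _ (by omega), uu_x _ f _ _ (by norm_num),
      uu_α _ f _ _ (by omega), uu_x _ f _ _ (by norm_num),
      bb3e _ f t (by omega), bb1]
    ring

/-! ### Norm bounds -/

lemma nsub {a b : ℂ} {u v : ℝ} (ha : ‖a‖ ≤ u) (hb : ‖b‖ ≤ v) : ‖a - b‖ ≤ u + v := by
  have := norm_sub_le a b; linarith

lemma nadd {a b : ℂ} {u v : ℝ} (ha : ‖a‖ ≤ u) (hb : ‖b‖ ≤ v) : ‖a + b‖ ≤ u + v := by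
  have := norm_add_le a b; linarith

lemma nhalf {a : ℂ} {u : ℝ} (ha : ‖a‖ ≤ u) : ‖a / 2‖ ≤ u / 2 := by
  rw [norm_div]
  have h2 : ‖(2:ℂ)‖ = 2 := by norm_num
  rw [h2]; linarith

lemma ntwo {a : ℂ} {u : ℝ} (ha : ‖a‖ ≤ u) : ‖2 * a‖ ≤ 2 * u := by
  rw [norm_mul]
  have h2 : ‖(2:ℂ)‖ = 2 := by norm_num
  rw [h2]; linarith

section Bounds

variable {n : ℕ} {f : (Fin 4 → ℕ) → ℂ}

lemma normCc (hn : 1 ≤ n) (hF : ∀ k, 1 ≤ k → k ≤ 4*n → ‖f (y k)‖ ≤ 1) :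
    ‖Cc f‖ ≤ 1/4 := by
  have h := hF 1 (by omega) (by omega)
  rw [Cc, norm_div]
  have h4 : ‖(4:ℂ)‖ = 4 := by norm_num
  rw [h4]; linarith

lemma normDd (hF : ∀ k, 1 ≤ k → k ≤ 4*n → ‖f (y k)‖ ≤ 1) (t : ℕ) (h : t+1 ≤ n) :
    ‖Dd f t‖ ≤ 2 := by
  have h1 := hF (4*t+3) (by omega) (by omega)
  have h2 := hF (4*t+4) (by omega) (by omega)
  have := nsub h1 h2
  rw [Dd]; linarith

lemma normEe (hF : ∀ k, 1 ≤ k → k ≤ 4*n → ‖f (y k)‖ ≤ 1) (t : ℕ) (h : t+2 ≤ n) :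
    ‖Ee f t‖ ≤ 2 := by
  have h1 := hF (4*t+5) (by omega) (by omega)
  have h2 := hF (4*t+6) (by omega) (by omega)
  have := nsub h1 h2
  rw [Ee]; linarith

lemma normTt (hn : 1 ≤ n) (hF : ∀ k, 1 ≤ k → k ≤ 4*n → ‖f (y k)‖ ≤ 1) :
    ∀ t, t+1 ≤ n → ‖Tt f t‖ ≤ 9/2 := by
  intro t
  induction t with
  | zero =>
      intro _
      have h2 := hF 2 (by omega) (by omega)
      have h3 := hF 3 (by omega) (by omega)
      have h4 := hF 4 (by omega) (by omega)
      have hc := normCc hn hF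
      have e1 : ‖f (y 2) - 2 * Cc f‖ ≤ 3/2 := by
        have := nsub h2 (ntwo hc); linarith
      have e2 : ‖f (y 3) - f (y 4)‖ ≤ 2 := by have := nsub h3 h4; linarith
      have e3 : ‖((f (y 2) - 2 * Cc f) + (f (y 3) - f (y 4))) / 2‖ ≤ 7/4 := by
        have := nhalf (nadd e1 e2); linarith
      have := nsub (nsub h3 hc) e3
      rw [Tt]; linarith
  | succ t ih =>
      intro h
      have hT := ih (by omega)
      have hc := normCc hn hF
      have h5 := hF (4*t+5) (by omega) (by omega)
      have h6 := hF (4*t+6) (by omega) (by omega)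
      have h7 := hF (4*t+7) (by omega) (by omega)
      have h8 := hF (4*t+8) (by omega) (by omega)
      have hE : ‖f (y (4*t+5)) - f (y (4*t+6))‖ ≤ 2 := by have := nsub h5 h6; linarith
      have hS : ‖f (y (4*t+5)) - Cc f - (Tt f t + (f (y (4*t+5)) - f (y (4*t+6)))) / 2‖
          ≤ 9/2 := by
        have := nsub (nsub h5 hc) (nhalf (nadd hT hE)); linarith
      have hD : ‖f (y (4*t+7)) - f (y (4*t+8))‖ ≤ 2 := by have := nsub h7 h8; linarith
      have := nsub (nsub h7 hc) (nhalf (nadd hS hD))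
      rw [Tt]; linarith

lemma normSvv (hn : 1 ≤ n) (hF : ∀ k, 1 ≤ k → k ≤ 4*n → ‖f (y k)‖ ≤ 1) :
    ∀ t, t+1 ≤ n → ‖Svv f t‖ ≤ 9/2 := by
  intro t h
  cases t with
  | zero =>
      have h2 := hF 2 (by omega) (by omega)
      have hc := normCc hn hF
      have := nsub h2 (ntwo hc)
      rw [Svv]; linarith
  | succ t =>
      have hT := normTt hn hF t (by omega)
      have hc := normCc hn hF
      have h5 := hF (4*t+5) (by omega) (by omega)
      have h6 := hF (4*t+6) (by omega) (by omega)
      have hE : ‖f (y (4*t+5)) - f (y (4*t+6))‖ ≤ 2 := by have := nsub h5 h6; linarith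
      have := nsub (nsub h5 hc) (nhalf (nadd hT hE))
      rw [Svv]; linarith

lemma normbb (hn : 1 ≤ n) (hF : ∀ k, 1 ≤ k → k ≤ 4*n → ‖f (y k)‖ ≤ 1)
    (hg : ‖f (z n)‖ ≤ 1) (j : ℕ) (h1 : 1 ≤ j) (h2 : j ≤ 4*n) : ‖bb n f j‖ ≤ 10 := by
  obtain ⟨t, r, hr, hj⟩ : ∃ t r, r < 4 ∧ j - 1 = 4*t + r :=
    ⟨(j-1)/4, (j-1)%4, Nat.mod_lt _ (by norm_num), (Nat.div_add_mod (j-1) 4).symm⟩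
  have ht : t + 1 ≤ n := by omega
  have hS := normSvv hn hF t ht
  have hD := normDd hF t ht
  have hc := normCc hn hF
  have hcase : j = 4*t+1 ∨ j = 4*t+2 ∨ j = 4*t+3 ∨ j = 4*t+4 := by omega
  rcases hcase with rfl | rfl | rfl | rfl
  · rw [bb1]
    have := nhalf (nsub hS hD); linarith
  · rw [bb2]
    have := nhalf (nadd hS hD); linarith
  · by_cases hlt : t + 1 < n
    · rw [bb3 n f t hlt]
      have hT := normTt hn hF t ht
      have hE := normEe hF t (by omega)
      have := nhalf (nsub hT hE); linarith
    · rw [bb3e n f t hlt]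
      have := nsub (nsub hg (ntwo hc)) (nhalf (nsub hS hD)); linarith
  · by_cases hlt : t + 1 < n
    · rw [bb4 n f t hlt]
      have hT := normTt hn hF t ht
      have hE := normEe hF t (by omega)
      have := nhalf (nadd hT hE); linarith
    · rw [bb4e n f t hlt]
      have hT := normTt hn hF t ht
      have := nsub hT (nsub (nsub hg (ntwo hc)) (nhalf (nsub hS hD))); linarith

lemma coordy (hn : 1 ≤ n) (k : ℕ) (hk1 : 1 ≤ k) (hk2 : k ≤ 4*n) (i : Fin 4) :
    y k i ≤ 4*n + 3 := by
  obtain ⟨t, r, hr, hk⟩ : ∃ t r, r < 4 ∧ k = 4*t+r :=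
    ⟨k/4, k%4, Nat.mod_lt _ (by norm_num), (Nat.div_add_mod k 4).symm⟩
  interval_cases r
  · obtain ⟨s, rfl⟩ : ∃ s, t = s + 1 := ⟨t-1, by omega⟩
    rw [show 4*(s+1) + 0 = 4*s+4 from by ring] at hk
    subst hk
    fin_cases i <;> rw [y4eq] <;> simp [α] <;> omega
  · rcases Nat.eq_zero_or_pos t with rfl | ht
    · rw [show 4*0+1 = 1 from rfl] at hk; subst hk
      fin_cases i <;> norm_num [y]
    · obtain ⟨s, rfl⟩ : ∃ s, t = s + 1 := ⟨t-1, by omega⟩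
      rw [show 4*(s+1) + 1 = 4*s+5 from by ring] at hk
      subst hk
      fin_cases i <;> rw [y5eq] <;> simp [α] <;> omega
  · rcases Nat.eq_zero_or_pos t with rfl | ht
    · rw [show 4*0+2 = 2 from rfl] at hk; subst hk
      fin_cases i <;> norm_num [y, α] <;> omega
    · obtain ⟨s, rfl⟩ : ∃ s, t = s + 1 := ⟨t-1, by omega⟩
      rw [show 4*(s+1) + 2 = 4*s+6 from by ring] at hk
      subst hk
      fin_cases i <;> rw [y6eq] <;> simp [α] <;> omega
  · subst hk
    fin_cases i <;> rw [y3eq] <;> simp [α] <;> omega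

lemma coordz (hn : 1 ≤ n) (i : Fin 4) : z n i ≤ 4*n + 3 := by
  obtain ⟨t, rfl⟩ : ∃ t, n = t + 1 := ⟨n-1, by omega⟩
  have hz : z (t+1) = ![α (4*t+3), 1, α (4*t+1), 3] := by
    have h1 : 4*(t+1)-1 = 4*t+3 := by omega
    have h2 : 4*(t+1)-3 = 4*t+1 := by omega
    simp only [z, h1, h2]
  fin_cases i <;> rw [hz] <;> simp [α] <;> omega

end Bounds

end St16

/-- for the sets S_{4n} ∪ {zₙ}, there is a constant C independent
of n such that every f with ‖f‖_∞ ≤ 1 admits a solution (u₁,…,u₄) of (1) with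
‖uᵢ‖_∞ ≤ C on the projections — even though geodesic lengths are unbounded. -/
theorem stmt_16 :
    ∃ C : ℝ, ∀ n : ℕ, 1 ≤ n → ∀ f : (Fin 4 → ℕ) → ℂ,
      (∀ p ∈ Sn (4 * n) ∪ {z n}, ‖f p‖ ≤ 1) →
      ∃ u, Solves (Sn (4 * n) ∪ {z n}) f u ∧
        ∀ i, ∀ a ∈ proj (Sn (4 * n) ∪ {z n}) i, ‖u i a‖ ≤ C := by
  refine ⟨10, ?_⟩
  intro n hn f hf
  have hF : ∀ k, 1 ≤ k → k ≤ 4*n → ‖f (y k)‖ ≤ 1 := by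
    intro k h1 h2
    exact hf (y k) (Set.mem_union_left _ ⟨k, Set.mem_Icc.mpr ⟨h1, h2⟩, rfl⟩)
  have hg : ‖f (z n)‖ ≤ 1 := hf (z n) (Set.mem_union_right _ rfl)
  refine ⟨St16.uu n f, St16.solves_main n f hn, ?_⟩
  intro i a ha
  obtain ⟨p, hp, rfl⟩ := ha
  by_cases h3 : p i ≤ 3
  · rw [St16.uu_x n f i _ h3]
    have := St16.normCc hn hF
    linarith
  · have hle : p i ≤ 4*n + 3 := by
      rcases hp with hp | hp
      · obtain ⟨k, hk, rfl⟩ := hp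
        rw [Set.mem_Icc] at hk
        exact St16.coordy hn k hk.1 hk.2 i
      · have hp' : p = z n := hp
        rw [hp']
        exact St16.coordz hn i
    have huu : St16.uu n f i (p i) = St16.bb n f (p i - 3) := by
      simp only [St16.uu, if_neg h3]
    rw [huu]
    exact St16.normbb hn hF hg _ (by omega) (by omega)
end

section
/- For every m ≥ 1, the set S_{2m+1} = {y₁, …, y_{2m+1}} is good and {x₁, x₂, x₃, α_{2m+1}, α_{2m+2}} is a boundary of S_{2m+1}. -/
open scoped BigOperators

lemma y1 : y 1 = ![0,1,2,3] := rfl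
lemma y2 : y 2 = ![0,1,α 1, α 2] := rfl

lemma y3 (j : ℕ) : y (4*j+3) = ![α (4*j+3), α (4*j+4), 2, α (4*j+2)] := by
  have h1 : 4*j+3 ≠ 1 := by omega
  have h2 : 4*j+3 ≠ 2 := by omega
  have h3 : (4*j+3) % 4 = 3 := by omega
  have e1 : 4*j+3-1 = 4*j+2 := by omega
  have e2 : 4*j+3+1 = 4*j+4 := by omega
  simp only [y, if_neg h1, if_neg h2, h3, e1, e2]

lemma y4 (j : ℕ) : y (4*j+4) = ![α (4*j+3), α (4*j+4), α (4*j+1), 3] := by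
  have h1 : 4*j+4 ≠ 1 := by omega
  have h2 : 4*j+4 ≠ 2 := by omega
  have h3 : (4*j+4) % 4 = 0 := by omega
  have e1 : 4*j+4-1 = 4*j+3 := by omega
  have e2 : 4*j+4-3 = 4*j+1 := by omega
  simp only [y, if_neg h1, if_neg h2, h3, e1, e2]

lemma y5 (j : ℕ) : y (4*j+5) = ![0, α (4*j+4), α (4*j+5), α (4*j+6)] := by
  have h1 : 4*j+5 ≠ 1 := by omega
  have h2 : 4*j+5 ≠ 2 := by omega
  have h3 : (4*j+5) % 4 = 1 := by omega
  have e1 : 4*j+5-1 = 4*j+4 := by omega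
  have e2 : 4*j+5+1 = 4*j+6 := by omega
  simp only [y, if_neg h1, if_neg h2, h3, e1, e2]

lemma y6 (j : ℕ) : y (4*j+6) = ![α (4*j+3), 1, α (4*j+5), α (4*j+6)] := by
  have h1 : 4*j+6 ≠ 1 := by omega
  have h2 : 4*j+6 ≠ 2 := by omega
  have h3 : (4*j+6) % 4 = 2 := by omega
  have e1 : 4*j+6-1 = 4*j+5 := by omega
  have e2 : 4*j+6-3 = 4*j+3 := by omega
  simp only [y, if_neg h1, if_neg h2, h3, e1, e2]

noncomputable section
variable (f : (Fin 4 → ℕ) → ℂ) (U : ℕ → ℂ) (N : ℕ)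

def ee : ℂ := f (y 1) - U 0 - U 1 - U 2

def seq : ℕ → (ℂ × ℂ) × (ℂ × ℂ)
  | 0 => ((0,0),(0, U 1))
  | (j+1) =>
    let b' := (seq j).2.2
    let S : ℂ := (if j = 0 then f (y 2) else f (y (4*j+1))) - U 0 - b'
    let cd : ℂ × ℂ :=
      if 4*j+4 ≤ N then
        let D : ℂ := f (y (4*j+3)) - f (y (4*j+4)) - U 2 + ee f U
        ((S - D)/2, (S + D)/2)
      else if 4*j+2 ≤ N then
        let d : ℂ := f (y (4*j+3)) - U (α (4*j+3)) - U (α (4*j+4)) - U 2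
        (S - d, d)
      else if 4*j+1 ≤ N then (U (α (4*j+1)), U (α (4*j+2)))
      else (0,0)
    let ab : ℂ × ℂ :=
      if 4*j+6 ≤ N then
        let T : ℂ := f (y (4*j+3)) - U 2 - cd.2
        let G : ℂ := f (y (4*j+6)) - f (y (4*j+5)) + U 0 - U 1
        ((T+G)/2, (T-G)/2)
      else if 4*j+5 ≤ N then
        let b : ℂ := f (y (4*j+5)) - U 0 - U (α (4*j+5)) - U (α (4*j+6))
        (f (y (4*j+3)) - b - U 2 - cd.2, b)
      else if 4*j+3 ≤ N then (U (α (4*j+3)), U (α (4*j+4)))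
      else (0,0)
    (cd, ab)

-- branch lemmas
lemma sLS (j : ℕ) (h : 4*j+2 ≤ N) :
    (seq f U N (j+1)).1.1 + (seq f U N (j+1)).1.2
      = (if j = 0 then f (y 2) else f (y (4*j+1))) - U 0 - (seq f U N j).2.2 := by
  rw [seq]
  by_cases h4 : 4*j+4 ≤ N <;> simp [h4, h] <;> ring


def uu : Fin 4 → ℕ → ℂ :=
  ![fun a => if a = 0 then U 0 else (seq f U N (a/4)).2.1,
    fun a => if a = 1 then U 1 else (seq f U N (a/4)).2.2,
    fun a => if a = 2 then U 2 else (seq f U N (a/4)).1.1,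
    fun a => if a = 3 then ee f U else (seq f U N (a/4)).1.2]

lemma uu00 : uu f U N 0 0 = U 0 := by simp [uu]
lemma uu11 : uu f U N 1 1 = U 1 := by simp [uu]
lemma uu22 : uu f U N 2 2 = U 2 := by simp [uu]
lemma uu33 : uu f U N 3 3 = ee f U := by simp [uu]

lemma uu0v (j a : ℕ) (ha : a = 4*j+6) : uu f U N 0 a = (seq f U N (j+1)).2.1 := by
  subst ha
  have h1 : 4*j+6 ≠ 0 := by omega
  have h2 : (4*j+6)/4 = j+1 := by omega
  simp [uu, h1, h2]

lemma uu1v (j a : ℕ) (ha : a = 4*j+7) : uu f U N 1 a = (seq f U N (j+1)).2.2 := by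
  subst ha
  have h1 : 4*j+7 ≠ 1 := by omega
  have h2 : (4*j+7)/4 = j+1 := by omega
  simp [uu, h1, h2]

lemma uu2v (j a : ℕ) (ha : a = 4*j+4) : uu f U N 2 a = (seq f U N (j+1)).1.1 := by
  subst ha
  have h1 : 4*j+4 ≠ 2 := by omega
  have h2 : (4*j+4)/4 = j+1 := by omega
  simp [uu, h1, h2]

lemma uu3v (j a : ℕ) (ha : a = 4*j+5) : uu f U N 3 a = (seq f U N (j+1)).1.2 := by
  subst ha
  have h1 : 4*j+5 ≠ 3 := by omega
  have h2 : (4*j+5)/4 = j+1 := by omega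
  simp [uu, h1, h2]
lemma sLD (j : ℕ) (h : 4*j+4 ≤ N) :
    (seq f U N (j+1)).1.2 - (seq f U N (j+1)).1.1
      = f (y (4*j+3)) - f (y (4*j+4)) - U 2 + ee f U := by
  rw [seq]; simp [h]; ring

lemma sLT (j : ℕ) (h : 4*j+5 ≤ N) :
    (seq f U N (j+1)).2.1 + (seq f U N (j+1)).2.2
      = f (y (4*j+3)) - U 2 - (seq f U N (j+1)).1.2 := by
  rw [seq]
  by_cases h6 : 4*j+6 ≤ N
  · have h4 : 4*j+4 ≤ N := by omega
    simp [h4, h6, h]; ring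
  · have h4 : 4*j+4 ≤ N := by omega
    simp [h4, h6, h]; ring

lemma sLG (j : ℕ) (h : 4*j+6 ≤ N) :
    (seq f U N (j+1)).2.1 - (seq f U N (j+1)).2.2
      = f (y (4*j+6)) - f (y (4*j+5)) + U 0 - U 1 := by
  rw [seq]
  have h4 : 4*j+4 ≤ N := by omega
  simp [h4, h]; ring

lemma sLcb (j : ℕ) (h1 : 4*j+1 ≤ N) (h2 : N < 4*j+2) :
    (seq f U N (j+1)).1 = (U (α (4*j+1)), U (α (4*j+2))) := by
  rw [seq]
  have h4 : ¬ 4*j+4 ≤ N := by omega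
  have h2' : ¬ 4*j+2 ≤ N := by omega
  simp [h4, h2', h1]

lemma sLdb (j : ℕ) (h : N = 4*j+3) :
    (seq f U N (j+1)).1.2 = f (y (4*j+3)) - U (α (4*j+3)) - U (α (4*j+4)) - U 2 := by
  rw [seq]
  have h4 : ¬ 4*j+4 ≤ N := by omega
  have h2 : 4*j+2 ≤ N := by omega
  simp [h4, h2]

lemma sLab (j : ℕ) (h : N = 4*j+3) :
    (seq f U N (j+1)).2 = (U (α (4*j+3)), U (α (4*j+4))) := by
  rw [seq]
  have h6 : ¬ 4*j+6 ≤ N := by omega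
  have h5 : ¬ 4*j+5 ≤ N := by omega
  have h3 : 4*j+3 ≤ N := by omega
  simp [h6, h5, h3]

lemma sLbb (j : ℕ) (h : N = 4*j+5) :
    (seq f U N (j+1)).2.2 = f (y (4*j+5)) - U 0 - U (α (4*j+5)) - U (α (4*j+6)) := by
  rw [seq]
  have h6 : ¬ 4*j+6 ≤ N := by omega
  have h5 : 4*j+5 ≤ N := by omega
  simp [h6, h5]

lemma sLat (j : ℕ) (h : N = 4*j+5) :
    (seq f U N (j+1)).2.1 = f (y (4*j+3))
      - (f (y (4*j+5)) - U 0 - U (α (4*j+5)) - U (α (4*j+6))) - U 2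
      - (seq f U N (j+1)).1.2 := by
  rw [seq]
  have h6 : ¬ 4*j+6 ≤ N := by omega
  have h5 : 4*j+5 ≤ N := by omega
  simp [h6, h5]


lemma yc (k : ℕ) (i : Fin 4) (v : Fin 4 → ℕ) (h : y k = v) : y k i = v i := by rw [h]

theorem solves_uu (hodd : N % 2 = 1) :
    ∀ k, 1 ≤ k → k ≤ N → f (y k) = ∑ i, uu f U N i (y k i) := by
  intro k hk1 hk2
  rw [Fin.sum_univ_four]
  rcases Nat.lt_or_ge k 3 with hk | hk
  · interval_cases k
    · rw [yc 1 0 _ y1, yc 1 1 _ y1, yc 1 2 _ y1, yc 1 3 _ y1]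
      rw [show ((![0,1,2,3] : Fin 4 → ℕ) 0) = 0 from rfl,
          show ((![0,1,2,3] : Fin 4 → ℕ) 1) = 1 from rfl,
          show ((![0,1,2,3] : Fin 4 → ℕ) 2) = 2 from rfl,
          show ((![0,1,2,3] : Fin 4 → ℕ) 3) = 3 from rfl]
      rw [uu00, uu11, uu22, uu33, ee]; ring
    · rw [yc 2 0 _ y2, yc 2 1 _ y2, yc 2 2 _ y2, yc 2 3 _ y2]
      rw [show ((![0,1,α 1,α 2] : Fin 4 → ℕ) 0) = 0 from rfl,
          show ((![0,1,α 1,α 2] : Fin 4 → ℕ) 1) = 1 from rfl,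
          show ((![0,1,α 1,α 2] : Fin 4 → ℕ) 2) = α 1 from rfl,
          show ((![0,1,α 1,α 2] : Fin 4 → ℕ) 3) = α 2 from rfl]
      rw [uu00, uu11, uu2v f U N 0 (α 1) (by simp only [α]),
          uu3v f U N 0 (α 2) (by simp only [α])]
      have hS := sLS f U N 0 (by omega)
      rw [if_pos rfl] at hS
      have hb0 : (seq f U N 0).2.2 = U 1 := by rw [seq]
      rw [hb0] at hS
      rw [show (0+1 : ℕ) = 1 from rfl] at hS
      linear_combination -hS
  · obtain ⟨j, hj⟩ : ∃ j, k = 4*j+3 ∨ k = 4*j+4 ∨ k = 4*j+5 ∨ k = 4*j+6 :=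
      ⟨(k-3)/4, by omega⟩
    rcases hj with rfl | rfl | rfl | rfl
    · -- k = 4j+3
      rw [yc _ 0 _ (y3 j), yc _ 1 _ (y3 j), yc _ 2 _ (y3 j), yc _ 3 _ (y3 j)]
      rw [show ((![α (4*j+3), α (4*j+4), 2, α (4*j+2)] : Fin 4 → ℕ) 0) = α (4*j+3) from rfl,
          show ((![α (4*j+3), α (4*j+4), 2, α (4*j+2)] : Fin 4 → ℕ) 1) = α (4*j+4) from rfl,
          show ((![α (4*j+3), α (4*j+4), 2, α (4*j+2)] : Fin 4 → ℕ) 2) = 2 from rfl,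
          show ((![α (4*j+3), α (4*j+4), 2, α (4*j+2)] : Fin 4 → ℕ) 3) = α (4*j+2) from rfl]
      rw [uu0v f U N j (α (4*j+3)) (by simp only [α]),
          uu1v f U N j (α (4*j+4)) (by simp only [α]),
          uu22, uu3v f U N j (α (4*j+2)) (by simp only [α])]
      by_cases h5 : 4*j+5 ≤ N
      · have hT := sLT f U N j h5
        linear_combination -hT
      · have hN : N = 4*j+3 := by omega
        have hd := sLdb f U N j hN
        have ha1 : (seq f U N (j+1)).2.1 = U (α (4*j+3)) := by rw [sLab f U N j hN]
        have ha2 : (seq f U N (j+1)).2.2 = U (α (4*j+4)) := by rw [sLab f U N j hN]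
        rw [hd, ha1, ha2]; ring
    · -- k = 4j+4
      rw [yc _ 0 _ (y4 j), yc _ 1 _ (y4 j), yc _ 2 _ (y4 j), yc _ 3 _ (y4 j)]
      rw [show ((![α (4*j+3), α (4*j+4), α (4*j+1), 3] : Fin 4 → ℕ) 0) = α (4*j+3) from rfl,
          show ((![α (4*j+3), α (4*j+4), α (4*j+1), 3] : Fin 4 → ℕ) 1) = α (4*j+4) from rfl,
          show ((![α (4*j+3), α (4*j+4), α (4*j+1), 3] : Fin 4 → ℕ) 2) = α (4*j+1) from rfl,
          show ((![α (4*j+3), α (4*j+4), α (4*j+1), 3] : Fin 4 → ℕ) 3) = 3 from rfl]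
      rw [uu0v f U N j (α (4*j+3)) (by simp only [α]),
          uu1v f U N j (α (4*j+4)) (by simp only [α]),
          uu2v f U N j (α (4*j+1)) (by simp only [α]), uu33]
      have h5 : 4*j+5 ≤ N := by omega
      have hT := sLT f U N j h5
      have hD := sLD f U N j (by omega)
      linear_combination hD - hT
    · -- k = 4j+5
      rw [yc _ 0 _ (y5 j), yc _ 1 _ (y5 j), yc _ 2 _ (y5 j), yc _ 3 _ (y5 j)]
      rw [show ((![0, α (4*j+4), α (4*j+5), α (4*j+6)] : Fin 4 → ℕ) 0) = 0 from rfl,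
          show ((![0, α (4*j+4), α (4*j+5), α (4*j+6)] : Fin 4 → ℕ) 1) = α (4*j+4) from rfl,
          show ((![0, α (4*j+4), α (4*j+5), α (4*j+6)] : Fin 4 → ℕ) 2) = α (4*j+5) from rfl,
          show ((![0, α (4*j+4), α (4*j+5), α (4*j+6)] : Fin 4 → ℕ) 3) = α (4*j+6) from rfl]
      rw [uu00, uu1v f U N j (α (4*j+4)) (by simp only [α]),
          uu2v f U N (j+1) (α (4*j+5)) (by simp only [α]; omega),
          uu3v f U N (j+1) (α (4*j+6)) (by simp only [α]; omega)]
      by_cases h6 : 4*j+6 ≤ N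
      · have hS := sLS f U N (j+1) (by omega)
        rw [if_neg (Nat.succ_ne_zero j)] at hS
        rw [show 4*(j+1)+1 = 4*j+5 from by ring] at hS
        linear_combination -hS
      · have hN : N = 4*j+5 := by omega
        have hb := sLbb f U N j hN
        have hc := sLcb f U N (j+1) (by omega) (by omega)
        have hc1 : (seq f U N (j+1+1)).1.1 = U (α (4*j+5)) := by
          rw [hc, show 4*(j+1)+1 = 4*j+5 from by ring]
        have hc2 : (seq f U N (j+1+1)).1.2 = U (α (4*j+6)) := by
          rw [hc, show 4*(j+1)+2 = 4*j+6 from by ring]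
        rw [hb, hc1, hc2]; ring
    · -- k = 4j+6
      rw [yc _ 0 _ (y6 j), yc _ 1 _ (y6 j), yc _ 2 _ (y6 j), yc _ 3 _ (y6 j)]
      rw [show ((![α (4*j+3), 1, α (4*j+5), α (4*j+6)] : Fin 4 → ℕ) 0) = α (4*j+3) from rfl,
          show ((![α (4*j+3), 1, α (4*j+5), α (4*j+6)] : Fin 4 → ℕ) 1) = 1 from rfl,
          show ((![α (4*j+3), 1, α (4*j+5), α (4*j+6)] : Fin 4 → ℕ) 2) = α (4*j+5) from rfl,
          show ((![α (4*j+3), 1, α (4*j+5), α (4*j+6)] : Fin 4 → ℕ) 3) = α (4*j+6) from rfl]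
      rw [uu0v f U N j (α (4*j+3)) (by simp only [α]), uu11,
          uu2v f U N (j+1) (α (4*j+5)) (by simp only [α]; omega),
          uu3v f U N (j+1) (α (4*j+6)) (by simp only [α]; omega)]
      have hS := sLS f U N (j+1) (by omega)
      rw [if_neg (Nat.succ_ne_zero j)] at hS
      rw [show 4*(j+1)+1 = 4*j+5 from by ring] at hS
      have hG := sLG f U N j (by omega)
      linear_combination -hS - hG

lemma shape : ∀ k, 1 ≤ k → ∀ i : Fin 4, y k i = (i : ℕ) ∨ (4 ≤ y k i ∧ y k i % 4 = ((i : ℕ) + 2) % 4) := by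
  intro k hk i
  rcases Nat.lt_or_ge k 3 with h | h
  · interval_cases k <;> fin_cases i <;> simp [y1, y2, α]
  · obtain ⟨j, hj⟩ : ∃ j, k = 4*j+3 ∨ k = 4*j+4 ∨ k = 4*j+5 ∨ k = 4*j+6 :=
      ⟨(k-3)/4, by omega⟩
    rcases hj with rfl | rfl | rfl | rfl <;> fin_cases i <;>
      simp [y3, y4, y5, y6, α] <;> omega

lemma mem_Sn (N k : ℕ) (h1 : 1 ≤ k) (h2 : k ≤ N) : y k ∈ Sn N :=
  ⟨k, Set.mem_Icc.mpr ⟨h1, h2⟩, rfl⟩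

lemma mem_proj (N k : ℕ) (h1 : 1 ≤ k) (h2 : k ≤ N) (i : Fin 4) :
    y k i ∈ proj (Sn N) i := ⟨y k, mem_Sn N k h1 h2, rfl⟩

theorem uu_presc (m : ℕ) (hm : 1 ≤ m) :
    ∀ i, ∀ a ∈ ({0, 1, 2, α (2*m+1), α (2*m+2)} : Set ℕ) ∩ proj (Sn (2*m+1)) i,
      uu f U (2*m+1) i a = U a := by
  rintro i a ⟨haB, p, ⟨k, hkIcc, rfl⟩, rfl⟩
  rw [Set.mem_Icc] at hkIcc
  obtain ⟨hk1, hk2⟩ := hkIcc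
  have hsh := shape k hk1 i
  simp only [Set.mem_insert_iff, Set.mem_singleton_iff] at haB
  rcases haB with h | h | h | h | h
  · -- value 0 : only coordinate 0
    fin_cases i <;> beta_reduce at hsh h ⊢
    · rw [h]; exact uu00 f U (2*m+1)
    all_goals (rw [h] at hsh; simp only [α] at hsh; omega)
  · fin_cases i <;> beta_reduce at hsh h ⊢
    · rw [h] at hsh; simp only [α] at hsh; omega
    · rw [h]; exact uu11 f U (2*m+1)
    all_goals (rw [h] at hsh; simp only [α] at hsh; omega)
  · fin_cases i <;> beta_reduce at hsh h ⊢
    · rw [h] at hsh; simp only [α] at hsh; omega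
    · rw [h] at hsh; simp only [α] at hsh; omega
    · rw [h]; exact uu22 f U (2*m+1)
    · rw [h] at hsh; simp only [α] at hsh; omega
  · -- value α (2m+1)
    rcases Nat.even_or_odd m with ⟨t, ht⟩ | ⟨t, ht⟩
    · -- m = 2t even, t ≥ 1, N = 4t+1: α (2m+1) = α (4t+1) = 4t+4 ≡ 0 mod 4: coordinate 2
      fin_cases i <;> beta_reduce at hsh h ⊢
      · rw [h] at hsh; simp only [α] at hsh; omega
      · rw [h] at hsh; simp only [α] at hsh; omega
      · rw [h]
        show uu f U (2*m+1) 2 (α (2*m+1)) = U (α (2*m+1))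
        rw [uu2v f U (2*m+1) t (α (2*m+1)) (by simp only [α]; omega)]
        have hc := sLcb f U (2*m+1) t (by omega) (by omega)
        rw [hc]
        rw [show 4*t+1 = 2*m+1 from by omega]
      · rw [h] at hsh; simp only [α] at hsh; omega
    · -- m = 2t+1 odd, N = 4t+3: α(2m+1) = α(4t+3) = 4t+6 ≡ 2: coordinate 0
      fin_cases i <;> beta_reduce at hsh h ⊢
      · rw [h]
        show uu f U (2*m+1) 0 (α (2*m+1)) = U (α (2*m+1))
        rw [uu0v f U (2*m+1) t (α (2*m+1)) (by simp only [α]; omega)]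
        have ha := sLab f U (2*m+1) t (by omega)
        have : (seq f U (2*m+1) (t+1)).2.1 = U (α (4*t+3)) := by rw [ha]
        rw [this, show 4*t+3 = 2*m+1 from by omega]
      all_goals (rw [h] at hsh; simp only [α] at hsh; omega)
  · -- value α (2m+2)
    rcases Nat.even_or_odd m with ⟨t, ht⟩ | ⟨t, ht⟩
    · -- m = 2t: α(2m+2) = α(4t+2) = 4t+5 ≡ 1: coordinate 3
      fin_cases i <;> beta_reduce at hsh h ⊢
      · rw [h] at hsh; simp only [α] at hsh; omega
      · rw [h] at hsh; simp only [α] at hsh; omega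
      · rw [h] at hsh; simp only [α] at hsh; omega
      · rw [h]
        show uu f U (2*m+1) 3 (α (2*m+2)) = U (α (2*m+2))
        rw [uu3v f U (2*m+1) t (α (2*m+2)) (by simp only [α]; omega)]
        have hc := sLcb f U (2*m+1) t (by omega) (by omega)
        rw [hc]
        rw [show 4*t+2 = 2*m+2 from by omega]
    · -- m = 2t+1: α(2m+2) = 4t+7 ≡ 3: coordinate 1
      fin_cases i <;> beta_reduce at hsh h ⊢
      · rw [h] at hsh; simp only [α] at hsh; omega
      · rw [h]
        show uu f U (2*m+1) 1 (α (2*m+2)) = U (α (2*m+2))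
        rw [uu1v f U (2*m+1) t (α (2*m+2)) (by simp only [α]; omega)]
        have ha := sLab f U (2*m+1) t (by omega)
        have : (seq f U (2*m+1) (t+1)).2.2 = U (α (4*t+4)) := by rw [ha]
        rw [this, show 4*t+4 = 2*m+2 from by omega]
      all_goals (rw [h] at hsh; simp only [α] at hsh; omega)

theorem unique_sol (m : ℕ) (hm : 1 ≤ m) (f : (Fin 4 → ℕ) → ℂ) (U : ℕ → ℂ)
    (u v : Fin 4 → ℕ → ℂ)
    (hu : Solves (Sn (2*m+1)) f u)
    (hu' : ∀ i, ∀ a ∈ ({0, 1, 2, α (2*m+1), α (2*m+2)} : Set ℕ) ∩ proj (Sn (2*m+1)) i, u i a = U a)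
    (hv : Solves (Sn (2*m+1)) f v)
    (hv' : ∀ i, ∀ a ∈ ({0, 1, 2, α (2*m+1), α (2*m+2)} : Set ℕ) ∩ proj (Sn (2*m+1)) i, v i a = U a) :
    ∀ i, ∀ a ∈ proj (Sn (2*m+1)) i, u i a = v i a := by
  -- difference-is-zero on boundary
  have hB0 : ∀ (i : Fin 4) (a : ℕ),
      a ∈ ({0, 1, 2, α (2*m+1), α (2*m+2)} : Set ℕ) → a ∈ proj (Sn (2*m+1)) i →
      u i a - v i a = 0 := by
    intro i a h1 h2
    rw [hu' i a ⟨h1, h2⟩, hv' i a ⟨h1, h2⟩, sub_self]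
  -- raw equations
  have Ew : ∀ k, 1 ≤ k → k ≤ 2*m+1 →
      (u 0 (y k 0) - v 0 (y k 0)) + (u 1 (y k 1) - v 1 (y k 1))
      + (u 2 (y k 2) - v 2 (y k 2)) + (u 3 (y k 3) - v 3 (y k 3)) = 0 := by
    intro k h1 h2
    have ha := hu (y k) (mem_Sn _ k h1 h2)
    have hb := hv (y k) (mem_Sn _ k h1 h2)
    rw [Fin.sum_univ_four] at ha hb
    linear_combination hb - ha
  -- base zeros
  have hz0 : u 0 0 - v 0 0 = 0 := by
    apply hB0 0 0 (by simp)
    have := mem_proj (2*m+1) 1 (by omega) (by omega) 0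
    rwa [yc 1 0 _ y1, show ((![0,1,2,3] : Fin 4 → ℕ) 0) = 0 from rfl] at this
  have hz1 : u 1 1 - v 1 1 = 0 := by
    apply hB0 1 1 (by simp)
    have := mem_proj (2*m+1) 1 (by omega) (by omega) 1
    rwa [yc 1 1 _ y1, show ((![0,1,2,3] : Fin 4 → ℕ) 1) = 1 from rfl] at this
  have hz2 : u 2 2 - v 2 2 = 0 := by
    apply hB0 2 2 (by simp)
    have := mem_proj (2*m+1) 1 (by omega) (by omega) 2
    rwa [yc 1 2 _ y1, show ((![0,1,2,3] : Fin 4 → ℕ) 2) = 2 from rfl] at this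
  -- specialized equations
  have Ew1 : (u 0 0 - v 0 0) + (u 1 1 - v 1 1) + (u 2 2 - v 2 2) + (u 3 3 - v 3 3) = 0 := by
    have := Ew 1 (by omega) (by omega)
    rwa [yc 1 0 _ y1, yc 1 1 _ y1, yc 1 2 _ y1, yc 1 3 _ y1,
      show ((![0,1,2,3] : Fin 4 → ℕ) 0) = 0 from rfl,
      show ((![0,1,2,3] : Fin 4 → ℕ) 1) = 1 from rfl,
      show ((![0,1,2,3] : Fin 4 → ℕ) 2) = 2 from rfl,
      show ((![0,1,2,3] : Fin 4 → ℕ) 3) = 3 from rfl] at this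
  have hz3 : u 3 3 - v 3 3 = 0 := by linear_combination Ew1 - hz0 - hz1 - hz2
  have Ew2 : (u 0 0 - v 0 0) + (u 1 1 - v 1 1) + (u 2 (α 1) - v 2 (α 1))
      + (u 3 (α 2) - v 3 (α 2)) = 0 := by
    have := Ew 2 (by omega) (by omega)
    rwa [yc 2 0 _ y2, yc 2 1 _ y2, yc 2 2 _ y2, yc 2 3 _ y2,
      show ((![0,1,α 1,α 2] : Fin 4 → ℕ) 0) = 0 from rfl,
      show ((![0,1,α 1,α 2] : Fin 4 → ℕ) 1) = 1 from rfl,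
      show ((![0,1,α 1,α 2] : Fin 4 → ℕ) 2) = α 1 from rfl,
      show ((![0,1,α 1,α 2] : Fin 4 → ℕ) 3) = α 2 from rfl] at this
  have Ew3 : ∀ j, 4*j+3 ≤ 2*m+1 →
      (u 0 (α (4*j+3)) - v 0 (α (4*j+3))) + (u 1 (α (4*j+4)) - v 1 (α (4*j+4)))
      + (u 2 2 - v 2 2) + (u 3 (α (4*j+2)) - v 3 (α (4*j+2))) = 0 := by
    intro j hj
    have := Ew (4*j+3) (by omega) hj
    rwa [yc _ 0 _ (y3 j), yc _ 1 _ (y3 j), yc _ 2 _ (y3 j), yc _ 3 _ (y3 j),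
      show ((![α (4*j+3), α (4*j+4), 2, α (4*j+2)] : Fin 4 → ℕ) 0) = α (4*j+3) from rfl,
      show ((![α (4*j+3), α (4*j+4), 2, α (4*j+2)] : Fin 4 → ℕ) 1) = α (4*j+4) from rfl,
      show ((![α (4*j+3), α (4*j+4), 2, α (4*j+2)] : Fin 4 → ℕ) 2) = 2 from rfl,
      show ((![α (4*j+3), α (4*j+4), 2, α (4*j+2)] : Fin 4 → ℕ) 3) = α (4*j+2) from rfl] at this
  have Ew4 : ∀ j, 4*j+4 ≤ 2*m+1 →
      (u 0 (α (4*j+3)) - v 0 (α (4*j+3))) + (u 1 (α (4*j+4)) - v 1 (α (4*j+4)))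
      + (u 2 (α (4*j+1)) - v 2 (α (4*j+1))) + (u 3 3 - v 3 3) = 0 := by
    intro j hj
    have := Ew (4*j+4) (by omega) hj
    rwa [yc _ 0 _ (y4 j), yc _ 1 _ (y4 j), yc _ 2 _ (y4 j), yc _ 3 _ (y4 j),
      show ((![α (4*j+3), α (4*j+4), α (4*j+1), 3] : Fin 4 → ℕ) 0) = α (4*j+3) from rfl,
      show ((![α (4*j+3), α (4*j+4), α (4*j+1), 3] : Fin 4 → ℕ) 1) = α (4*j+4) from rfl,
      show ((![α (4*j+3), α (4*j+4), α (4*j+1), 3] : Fin 4 → ℕ) 2) = α (4*j+1) from rfl,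
      show ((![α (4*j+3), α (4*j+4), α (4*j+1), 3] : Fin 4 → ℕ) 3) = 3 from rfl] at this
  have Ew5 : ∀ j, 4*j+5 ≤ 2*m+1 →
      (u 0 0 - v 0 0) + (u 1 (α (4*j+4)) - v 1 (α (4*j+4)))
      + (u 2 (α (4*j+5)) - v 2 (α (4*j+5))) + (u 3 (α (4*j+6)) - v 3 (α (4*j+6))) = 0 := by
    intro j hj
    have := Ew (4*j+5) (by omega) hj
    rwa [yc _ 0 _ (y5 j), yc _ 1 _ (y5 j), yc _ 2 _ (y5 j), yc _ 3 _ (y5 j),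
      show ((![0, α (4*j+4), α (4*j+5), α (4*j+6)] : Fin 4 → ℕ) 0) = 0 from rfl,
      show ((![0, α (4*j+4), α (4*j+5), α (4*j+6)] : Fin 4 → ℕ) 1) = α (4*j+4) from rfl,
      show ((![0, α (4*j+4), α (4*j+5), α (4*j+6)] : Fin 4 → ℕ) 2) = α (4*j+5) from rfl,
      show ((![0, α (4*j+4), α (4*j+5), α (4*j+6)] : Fin 4 → ℕ) 3) = α (4*j+6) from rfl] at this
  have Ew6 : ∀ j, 4*j+6 ≤ 2*m+1 →
      (u 0 (α (4*j+3)) - v 0 (α (4*j+3))) + (u 1 1 - v 1 1)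
      + (u 2 (α (4*j+5)) - v 2 (α (4*j+5))) + (u 3 (α (4*j+6)) - v 3 (α (4*j+6))) = 0 := by
    intro j hj
    have := Ew (4*j+6) (by omega) hj
    rwa [yc _ 0 _ (y6 j), yc _ 1 _ (y6 j), yc _ 2 _ (y6 j), yc _ 3 _ (y6 j),
      show ((![α (4*j+3), 1, α (4*j+5), α (4*j+6)] : Fin 4 → ℕ) 0) = α (4*j+3) from rfl,
      show ((![α (4*j+3), 1, α (4*j+5), α (4*j+6)] : Fin 4 → ℕ) 1) = 1 from rfl,
      show ((![α (4*j+3), 1, α (4*j+5), α (4*j+6)] : Fin 4 → ℕ) 2) = α (4*j+5) from rfl,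
      show ((![α (4*j+3), 1, α (4*j+5), α (4*j+6)] : Fin 4 → ℕ) 3) = α (4*j+6) from rfl] at this
  -- the inductive step, with previous-level facts supplied as hypotheses
  have step : ∀ jj : ℕ, ∀ bsym : ℕ,
      (4*jj+1 ≤ 2*m+1 →
        (u 0 0 - v 0 0) + (u 1 bsym - v 1 bsym) + (u 2 (α (4*jj+1)) - v 2 (α (4*jj+1)))
        + (u 3 (α (4*jj+2)) - v 3 (α (4*jj+2))) = 0) →
      (4*jj+1 ≤ 2*m+1 → u 1 bsym - v 1 bsym = 0) →
      (4*jj+1 ≤ 2*m+1 → (u 2 (α (4*jj+1)) - v 2 (α (4*jj+1)) = 0)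
          ∧ (u 3 (α (4*jj+2)) - v 3 (α (4*jj+2)) = 0)) ∧
      (4*jj+3 ≤ 2*m+1 → (u 0 (α (4*jj+3)) - v 0 (α (4*jj+3)) = 0)
          ∧ (u 1 (α (4*jj+4)) - v 1 (α (4*jj+4)) = 0)) := by
    intro jj bsym hEc hbp
    by_cases hA : 2*m+1 = 4*jj+1
    · -- top case, m even: α(2m+1), α(2m+2) are boundary at coords 2,3
      refine ⟨fun h1 => ?_, fun h3 => absurd h3 (by omega)⟩
      obtain ⟨t, rfl⟩ : ∃ t, jj = t+1 := ⟨jj - 1, by omega⟩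
      constructor
      · apply hB0 2 (α (4*(t+1)+1))
        · rw [show 4*(t+1)+1 = 2*m+1 from by omega]; simp
        · have := mem_proj (2*m+1) (4*t+5) (by omega) (by omega) 2
          rwa [yc _ 2 _ (y5 t),
            show ((![0, α (4*t+4), α (4*t+5), α (4*t+6)] : Fin 4 → ℕ) 2) = α (4*t+5) from rfl,
            show 4*t+5 = 4*(t+1)+1 from by ring] at this
      · apply hB0 3 (α (4*(t+1)+2))
        · rw [show 4*(t+1)+2 = 2*m+2 from by omega]; simp
        · have := mem_proj (2*m+1) (4*t+5) (by omega) (by omega) 3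
          rwa [yc _ 3 _ (y5 t),
            show ((![0, α (4*t+4), α (4*t+5), α (4*t+6)] : Fin 4 → ℕ) 3) = α (4*t+6) from rfl,
            show 4*t+6 = 4*(t+1)+2 from by ring] at this
    · by_cases hBc : 2*m+1 = 4*jj+3
      · -- top case, m odd: α(2m+1), α(2m+2) boundary at coords 0,1
        have ha : u 0 (α (4*jj+3)) - v 0 (α (4*jj+3)) = 0 := by
          apply hB0 0 (α (4*jj+3))
          · rw [show 4*jj+3 = 2*m+1 from by omega]; simp
          · have := mem_proj (2*m+1) (4*jj+3) (by omega) (by omega) 0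
            rwa [yc _ 0 _ (y3 jj),
              show ((![α (4*jj+3), α (4*jj+4), 2, α (4*jj+2)] : Fin 4 → ℕ) 0) = α (4*jj+3) from rfl] at this
        have hb : u 1 (α (4*jj+4)) - v 1 (α (4*jj+4)) = 0 := by
          apply hB0 1 (α (4*jj+4))
          · rw [show 4*jj+4 = 2*m+2 from by omega]; simp
          · have := mem_proj (2*m+1) (4*jj+3) (by omega) (by omega) 1
            rwa [yc _ 1 _ (y3 jj),
              show ((![α (4*jj+3), α (4*jj+4), 2, α (4*jj+2)] : Fin 4 → ℕ) 1) = α (4*jj+4) from rfl] at this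
        have h3e := Ew3 jj (by omega)
        have hd : u 3 (α (4*jj+2)) - v 3 (α (4*jj+2)) = 0 := by
          linear_combination h3e - ha - hb - hz2
        have hc : u 2 (α (4*jj+1)) - v 2 (α (4*jj+1)) = 0 := by
          linear_combination (hEc (by omega)) - hz0 - (hbp (by omega)) - hd
        exact ⟨fun _ => ⟨hc, hd⟩, fun _ => ⟨ha, hb⟩⟩
      · by_cases hC : 2*m+1 = 4*jj+5
        · -- next-to-top, m even
          have h1 : 4*jj+1 ≤ 2*m+1 := by omega
          have htc : u 2 (α (4*jj+5)) - v 2 (α (4*jj+5)) = 0 := by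
            apply hB0 2 (α (4*jj+5))
            · rw [show 4*jj+5 = 2*m+1 from by omega]; simp
            · have := mem_proj (2*m+1) (4*jj+5) (by omega) (by omega) 2
              rwa [yc _ 2 _ (y5 jj),
                show ((![0, α (4*jj+4), α (4*jj+5), α (4*jj+6)] : Fin 4 → ℕ) 2) = α (4*jj+5) from rfl] at this
          have htd : u 3 (α (4*jj+6)) - v 3 (α (4*jj+6)) = 0 := by
            apply hB0 3 (α (4*jj+6))
            · rw [show 4*jj+6 = 2*m+2 from by omega]; simp
            · have := mem_proj (2*m+1) (4*jj+5) (by omega) (by omega) 3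
              rwa [yc _ 3 _ (y5 jj),
                show ((![0, α (4*jj+4), α (4*jj+5), α (4*jj+6)] : Fin 4 → ℕ) 3) = α (4*jj+6) from rfl] at this
          have h5e := Ew5 jj (by omega)
          have hbn : u 1 (α (4*jj+4)) - v 1 (α (4*jj+4)) = 0 := by
            linear_combination h5e - hz0 - htc - htd
          have h3e := Ew3 jj (by omega)
          have h4e := Ew4 jj (by omega)
          have hc : u 2 (α (4*jj+1)) - v 2 (α (4*jj+1)) = 0 := by
            linear_combination ((hEc h1) - hz0 - (hbp h1) + h4e - hz3 - h3e + hz2) / 2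
          have hd : u 3 (α (4*jj+2)) - v 3 (α (4*jj+2)) = 0 := by
            linear_combination ((hEc h1) - hz0 - (hbp h1) - h4e + hz3 + h3e - hz2) / 2
          have han : u 0 (α (4*jj+3)) - v 0 (α (4*jj+3)) = 0 := by
            linear_combination h3e - hz2 - hd - hbn
          exact ⟨fun _ => ⟨hc, hd⟩, fun _ => ⟨han, hbn⟩⟩
        · -- generic: 2m+1 ≥ 4jj+7 (provided 4jj+1 ≤ 2m+1)
          refine ⟨fun h1 => ?_, fun h3 => ?_⟩ <;>
          · have hD : 4*jj+7 ≤ 2*m+1 := by omega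
            have h3e := Ew3 jj (by omega)
            have h4e := Ew4 jj (by omega)
            have h5e := Ew5 jj (by omega)
            have h6e := Ew6 jj (by omega)
            have h1' : 4*jj+1 ≤ 2*m+1 := by omega
            have hc : u 2 (α (4*jj+1)) - v 2 (α (4*jj+1)) = 0 := by
              linear_combination ((hEc h1') - hz0 - (hbp h1') + h4e - hz3 - h3e + hz2) / 2
            have hd : u 3 (α (4*jj+2)) - v 3 (α (4*jj+2)) = 0 := by
              linear_combination ((hEc h1') - hz0 - (hbp h1') - h4e + hz3 + h3e - hz2) / 2
            have han : u 0 (α (4*jj+3)) - v 0 (α (4*jj+3)) = 0 := by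
              linear_combination (h3e - hz2 - hd + h6e - h5e - hz1 + hz0) / 2
            have hbn : u 1 (α (4*jj+4)) - v 1 (α (4*jj+4)) = 0 := by
              linear_combination (h3e - hz2 - hd - h6e + h5e + hz1 - hz0) / 2
            first
            | exact ⟨hc, hd⟩
            | exact ⟨han, hbn⟩
  -- the main induction
  have main : ∀ jj : ℕ,
      (4*jj+1 ≤ 2*m+1 → (u 2 (α (4*jj+1)) - v 2 (α (4*jj+1)) = 0)
          ∧ (u 3 (α (4*jj+2)) - v 3 (α (4*jj+2)) = 0)) ∧
      (4*jj+3 ≤ 2*m+1 → (u 0 (α (4*jj+3)) - v 0 (α (4*jj+3)) = 0)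
          ∧ (u 1 (α (4*jj+4)) - v 1 (α (4*jj+4)) = 0)) := by
    intro jj
    induction jj with
    | zero =>
      apply step 0 1
      · intro _
        have := Ew2
        rwa [show α 1 = α (4*0+1) from by norm_num, show α 2 = α (4*0+2) from by norm_num] at this
      · intro _; exact hz1
    | succ j ih =>
      apply step (j+1) (α (4*j+4))
      · intro h
        have := Ew5 j (by omega)
        rwa [show α (4*j+5) = α (4*(j+1)+1) from by ring_nf,
          show α (4*j+6) = α (4*(j+1)+2) from by ring_nf] at this
      · intro h
        exact (ih.2 (by omega)).2
  -- final coverage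
  rintro i a ⟨p, ⟨k, hkIcc, rfl⟩, rfl⟩
  rw [Set.mem_Icc] at hkIcc
  obtain ⟨hk1, hk2⟩ := hkIcc
  rw [← sub_eq_zero]
  change u i (y k i) - v i (y k i) = 0
  rcases Nat.lt_or_ge k 3 with hk | hk
  · interval_cases k
    · fin_cases i <;> beta_reduce
      · show u 0 (y 1 0) - v 0 (y 1 0) = 0
        rwa [yc 1 0 _ y1, show ((![0,1,2,3] : Fin 4 → ℕ) 0) = 0 from rfl]
      · show u 1 (y 1 1) - v 1 (y 1 1) = 0
        rwa [yc 1 1 _ y1, show ((![0,1,2,3] : Fin 4 → ℕ) 1) = 1 from rfl]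
      · show u 2 (y 1 2) - v 2 (y 1 2) = 0
        rwa [yc 1 2 _ y1, show ((![0,1,2,3] : Fin 4 → ℕ) 2) = 2 from rfl]
      · show u 3 (y 1 3) - v 3 (y 1 3) = 0
        rwa [yc 1 3 _ y1, show ((![0,1,2,3] : Fin 4 → ℕ) 3) = 3 from rfl]
    · fin_cases i <;> beta_reduce
      · show u 0 (y 2 0) - v 0 (y 2 0) = 0
        rwa [yc 2 0 _ y2, show ((![0,1,α 1,α 2] : Fin 4 → ℕ) 0) = 0 from rfl]
      · show u 1 (y 2 1) - v 1 (y 2 1) = 0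
        rwa [yc 2 1 _ y2, show ((![0,1,α 1,α 2] : Fin 4 → ℕ) 1) = 1 from rfl]
      · show u 2 (y 2 2) - v 2 (y 2 2) = 0
        rw [yc 2 2 _ y2, show ((![0,1,α 1,α 2] : Fin 4 → ℕ) 2) = α 1 from rfl]
        have := ((main 0).1 (by omega)).1
        rwa [show α (4*0+1) = α 1 from by norm_num] at this
      · show u 3 (y 2 3) - v 3 (y 2 3) = 0
        rw [yc 2 3 _ y2, show ((![0,1,α 1,α 2] : Fin 4 → ℕ) 3) = α 2 from rfl]
        have := ((main 0).1 (by omega)).2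
        rwa [show α (4*0+2) = α 2 from by norm_num] at this
  · obtain ⟨j, hj⟩ : ∃ j, k = 4*j+3 ∨ k = 4*j+4 ∨ k = 4*j+5 ∨ k = 4*j+6 :=
      ⟨(k-3)/4, by omega⟩
    rcases hj with rfl | rfl | rfl | rfl
    · fin_cases i <;> beta_reduce
      · show u 0 (y (4*j+3) 0) - v 0 (y (4*j+3) 0) = 0
        rw [yc _ 0 _ (y3 j), show ((![α (4*j+3), α (4*j+4), 2, α (4*j+2)] : Fin 4 → ℕ) 0) = α (4*j+3) from rfl]
        exact ((main j).2 (by omega)).1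
      · show u 1 (y (4*j+3) 1) - v 1 (y (4*j+3) 1) = 0
        rw [yc _ 1 _ (y3 j), show ((![α (4*j+3), α (4*j+4), 2, α (4*j+2)] : Fin 4 → ℕ) 1) = α (4*j+4) from rfl]
        exact ((main j).2 (by omega)).2
      · show u 2 (y (4*j+3) 2) - v 2 (y (4*j+3) 2) = 0
        rwa [yc _ 2 _ (y3 j), show ((![α (4*j+3), α (4*j+4), 2, α (4*j+2)] : Fin 4 → ℕ) 2) = 2 from rfl]
      · show u 3 (y (4*j+3) 3) - v 3 (y (4*j+3) 3) = 0
        rw [yc _ 3 _ (y3 j), show ((![α (4*j+3), α (4*j+4), 2, α (4*j+2)] : Fin 4 → ℕ) 3) = α (4*j+2) from rfl]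
        exact ((main j).1 (by omega)).2
    · fin_cases i <;> beta_reduce
      · show u 0 (y (4*j+4) 0) - v 0 (y (4*j+4) 0) = 0
        rw [yc _ 0 _ (y4 j), show ((![α (4*j+3), α (4*j+4), α (4*j+1), 3] : Fin 4 → ℕ) 0) = α (4*j+3) from rfl]
        exact ((main j).2 (by omega)).1
      · show u 1 (y (4*j+4) 1) - v 1 (y (4*j+4) 1) = 0
        rw [yc _ 1 _ (y4 j), show ((![α (4*j+3), α (4*j+4), α (4*j+1), 3] : Fin 4 → ℕ) 1) = α (4*j+4) from rfl]
        exact ((main j).2 (by omega)).2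
      · show u 2 (y (4*j+4) 2) - v 2 (y (4*j+4) 2) = 0
        rw [yc _ 2 _ (y4 j), show ((![α (4*j+3), α (4*j+4), α (4*j+1), 3] : Fin 4 → ℕ) 2) = α (4*j+1) from rfl]
        exact ((main j).1 (by omega)).1
      · show u 3 (y (4*j+4) 3) - v 3 (y (4*j+4) 3) = 0
        rwa [yc _ 3 _ (y4 j), show ((![α (4*j+3), α (4*j+4), α (4*j+1), 3] : Fin 4 → ℕ) 3) = 3 from rfl]
    · fin_cases i <;> beta_reduce
      · show u 0 (y (4*j+5) 0) - v 0 (y (4*j+5) 0) = 0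
        rwa [yc _ 0 _ (y5 j), show ((![0, α (4*j+4), α (4*j+5), α (4*j+6)] : Fin 4 → ℕ) 0) = 0 from rfl]
      · show u 1 (y (4*j+5) 1) - v 1 (y (4*j+5) 1) = 0
        rw [yc _ 1 _ (y5 j), show ((![0, α (4*j+4), α (4*j+5), α (4*j+6)] : Fin 4 → ℕ) 1) = α (4*j+4) from rfl]
        exact ((main j).2 (by omega)).2
      · show u 2 (y (4*j+5) 2) - v 2 (y (4*j+5) 2) = 0
        rw [yc _ 2 _ (y5 j), show ((![0, α (4*j+4), α (4*j+5), α (4*j+6)] : Fin 4 → ℕ) 2) = α (4*j+5) from rfl]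
        have := ((main (j+1)).1 (by omega)).1
        rwa [show α (4*(j+1)+1) = α (4*j+5) from by ring_nf] at this
      · show u 3 (y (4*j+5) 3) - v 3 (y (4*j+5) 3) = 0
        rw [yc _ 3 _ (y5 j), show ((![0, α (4*j+4), α (4*j+5), α (4*j+6)] : Fin 4 → ℕ) 3) = α (4*j+6) from rfl]
        have := ((main (j+1)).1 (by omega)).2
        rwa [show α (4*(j+1)+2) = α (4*j+6) from by ring_nf] at this
    · fin_cases i <;> beta_reduce
      · show u 0 (y (4*j+6) 0) - v 0 (y (4*j+6) 0) = 0
        rw [yc _ 0 _ (y6 j), show ((![α (4*j+3), 1, α (4*j+5), α (4*j+6)] : Fin 4 → ℕ) 0) = α (4*j+3) from rfl]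
        exact ((main j).2 (by omega)).1
      · show u 1 (y (4*j+6) 1) - v 1 (y (4*j+6) 1) = 0
        rwa [yc _ 1 _ (y6 j), show ((![α (4*j+3), 1, α (4*j+5), α (4*j+6)] : Fin 4 → ℕ) 1) = 1 from rfl]
      · show u 2 (y (4*j+6) 2) - v 2 (y (4*j+6) 2) = 0
        rw [yc _ 2 _ (y6 j), show ((![α (4*j+3), 1, α (4*j+5), α (4*j+6)] : Fin 4 → ℕ) 2) = α (4*j+5) from rfl]
        have := ((main (j+1)).1 (by omega)).1
        rwa [show α (4*(j+1)+1) = α (4*j+5) from by ring_nf] at this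
      · show u 3 (y (4*j+6) 3) - v 3 (y (4*j+6) 3) = 0
        rw [yc _ 3 _ (y6 j), show ((![α (4*j+3), 1, α (4*j+5), α (4*j+6)] : Fin 4 → ℕ) 3) = α (4*j+6) from rfl]
        have := ((main (j+1)).1 (by omega)).2
        rwa [show α (4*(j+1)+2) = α (4*j+6) from by ring_nf] at this

lemma solves_Sn (f : (Fin 4 → ℕ) → ℂ) (U : ℕ → ℂ) (N : ℕ) (hodd : N % 2 = 1) :
    Solves (Sn N) f (uu f U N) := by
  rintro p ⟨k, hkIcc, rfl⟩
  rw [Set.mem_Icc] at hkIcc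
  exact solves_uu f U N hodd k hkIcc.1 hkIcc.2


/-- S_{2m+1} is good and {x₁,x₂,x₃,α_{2m+1},α_{2m+2}} is a
boundary of S_{2m+1}. -/
theorem stmt_17 (m : ℕ) (hm : 1 ≤ m) :
    IsGood (Sn (2 * m + 1)) ∧
    IsBoundary (Sn (2 * m + 1)) {0, 1, 2, α (2 * m + 1), α (2 * m + 2)} := by
  constructor
  · intro f
    exact ⟨uu f 0 (2*m+1), solves_Sn f 0 (2*m+1) (by omega)⟩
  constructor
  · -- B ⊆ ⋃ proj
    intro a ha
    simp only [Set.mem_insert_iff, Set.mem_singleton_iff] at ha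
    rw [Set.mem_iUnion]
    rcases ha with rfl | rfl | rfl | rfl | rfl
    · refine ⟨0, ?_⟩
      have := mem_proj (2*m+1) 1 (by omega) (by omega) 0
      rwa [yc 1 0 _ y1, show ((![0,1,2,3] : Fin 4 → ℕ) 0) = 0 from rfl] at this
    · refine ⟨1, ?_⟩
      have := mem_proj (2*m+1) 1 (by omega) (by omega) 1
      rwa [yc 1 1 _ y1, show ((![0,1,2,3] : Fin 4 → ℕ) 1) = 1 from rfl] at this
    · refine ⟨2, ?_⟩
      have := mem_proj (2*m+1) 1 (by omega) (by omega) 2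
      rwa [yc 1 2 _ y1, show ((![0,1,2,3] : Fin 4 → ℕ) 2) = 2 from rfl] at this
    · rcases Nat.even_or_odd m with ⟨t, ht⟩ | ⟨t, ht⟩
      · refine ⟨2, ?_⟩
        obtain ⟨s, rfl⟩ : ∃ s, t = s+1 := ⟨t-1, by omega⟩
        have := mem_proj (2*m+1) (4*s+5) (by omega) (by omega) 2
        rwa [yc _ 2 _ (y5 s),
          show ((![0, α (4*s+4), α (4*s+5), α (4*s+6)] : Fin 4 → ℕ) 2) = α (4*s+5) from rfl,
          show 4*s+5 = 2*m+1 from by omega] at this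
      · refine ⟨0, ?_⟩
        have := mem_proj (2*m+1) (4*t+3) (by omega) (by omega) 0
        rwa [yc _ 0 _ (y3 t),
          show ((![α (4*t+3), α (4*t+4), 2, α (4*t+2)] : Fin 4 → ℕ) 0) = α (4*t+3) from rfl,
          show 4*t+3 = 2*m+1 from by omega] at this
    · rcases Nat.even_or_odd m with ⟨t, ht⟩ | ⟨t, ht⟩
      · refine ⟨3, ?_⟩
        obtain ⟨s, rfl⟩ : ∃ s, t = s+1 := ⟨t-1, by omega⟩
        have := mem_proj (2*m+1) (4*s+5) (by omega) (by omega) 3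
        rwa [yc _ 3 _ (y5 s),
          show ((![0, α (4*s+4), α (4*s+5), α (4*s+6)] : Fin 4 → ℕ) 3) = α (4*s+6) from rfl,
          show 4*s+6 = 2*m+2 from by omega] at this
      · refine ⟨1, ?_⟩
        have := mem_proj (2*m+1) (4*t+3) (by omega) (by omega) 1
        rwa [yc _ 1 _ (y3 t),
          show ((![α (4*t+3), α (4*t+4), 2, α (4*t+2)] : Fin 4 → ℕ) 1) = α (4*t+4) from rfl,
          show 4*t+4 = 2*m+2 from by omega] at this
  · intro f U
    constructor
    · exact ⟨uu f U (2*m+1), solves_Sn f U (2*m+1) (by omega), uu_presc f U m hm⟩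
    · intro u v hu hu' hv hv'
      exact unique_sol m hm f U u v hu hu' hv hv'
end
end

section
/- For every n ≥ 2 and any point v obtained from y_{2n} (if y_{2n} ∈ K) or from y_{2n−1} by replacing the coordinate equal to α_{2n} with another symbol occurring in the same coordinate position among the points y₁,…,y_{2n}, the set S_{2n} ∪ {v} is good; equivalently, the (2n+1)×(2n+1) matrix with rows indexed by {y₁,…,y_{2n}, v} and columns indexed by {x₄, α₁,…,α_{2n}} (entry 1 iff the symbol occurs in the point) has linearly independent rows except that the last row is not in the span of the first 2n rows. -/
open scoped BigOperators

/-!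
Every symbol occurs in a single coordinate position, so the points involved have pairwise
distinct coordinates, and equation (1) on a finite set becomes a linear system whose matrix
is the incidence matrix (points against symbols): when that matrix is square and invertible,
`uᵢ(α_j) = U_j` for the solution `U` works in every coordinate.

Write `e_j` for the unit vector of the column of `α_j` (with `e₀` the column of `x₄`). Then
`y₁ = e₀`, `y₂ = e₁ + e₂`, `y₂ₜ₊₁ = e₂ₜ + e₂ₜ₊₁ + e₂ₜ₊₂`, and `y₂ₜ₊₂` is
`e₂ₜ₋₁ + e₂ₜ₊₁ + e₂ₜ₊₂` up to `e₀`. Hence `y₂ₜ₊₁ - y₂ₜ₊₂` gives `e₂ₜ - e₂ₜ₋₁`, which together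
with `e₂ₜ₋₁ + e₂ₜ` yields both vectors, and induction shows that the rows of `S₂ₙ` span
`e₀, …, e₂ₙ₋₂` and `e₂ₙ₋₁ + e₂ₙ`. The point `v` trades the `e₂ₙ` of `y₂ₙ₋₁` or `y₂ₙ` for the
vector of a symbol in the position of `α₂ₙ`; this symbol is neither `α₂ₙ` nor `α₂ₙ₋₁`, so its
vector lies among `0, e₀, …, e₂ₙ₋₂`. Adding `v` therefore produces `e₂ₙ`, the `2n + 1` rows
span `ℚ^{2n+1}`, and they are linearly independent.
-/

open Function

lemma y_of_mod_four_eq_one {k : ℕ} (hk : 3 ≤ k) (h : k % 4 = 1) :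
    y k = ![0, α (k - 1), α k, α (k + 1)] := by
  simp only [y, if_neg (show k ≠ 1 by omega), if_neg (show k ≠ 2 by omega), h]

lemma y_of_mod_four_eq_two {k : ℕ} (hk : 3 ≤ k) (h : k % 4 = 2) :
    y k = ![α (k - 3), 1, α (k - 1), α k] := by
  simp only [y, if_neg (show k ≠ 1 by omega), if_neg (show k ≠ 2 by omega), h]

lemma y_of_mod_four_eq_three {k : ℕ} (h : k % 4 = 3) :
    y k = ![α k, α (k + 1), 2, α (k - 1)] := by
  simp only [y, if_neg (show k ≠ 1 by omega), if_neg (show k ≠ 2 by omega), h]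

lemma y_of_mod_four_eq_zero {k : ℕ} (h : k % 4 = 0) :
    y k = ![α (k - 1), α k, α (k - 3), 3] := by
  simp only [y, if_neg (show k ≠ 1 by omega), if_neg (show k ≠ 2 by omega), h]

/-- The coordinate position in which a symbol occurs: `xᵢ` in position `i - 1`, and
`α₄ₘ₋₃, α₄ₘ₋₂, α₄ₘ₋₁, α₄ₘ` in positions `2, 3, 0, 1`. -/
def symbolPos (s : ℕ) : ℕ := if s ≤ 3 then s else (s + 2) % 4

lemma symbolPos_alpha {j : ℕ} (hj : 1 ≤ j) : symbolPos (α j) = (j + 1) % 4 := by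
  rw [symbolPos, if_neg (by unfold α; omega)]
  unfold α
  omega

lemma symbolPos_y {k : ℕ} (hk : 1 ≤ k) (t : Fin 4) : symbolPos (y k t) = t := by
  rcases (show k = 1 ∨ k = 2 ∨ 3 ≤ k by omega) with rfl | rfl | hk3
  · fin_cases t <;> decide
  · fin_cases t <;> decide
  rcases (show k % 4 = 1 ∨ k % 4 = 2 ∨ k % 4 = 3 ∨ k % 4 = 0 by omega) with h | h | h | h <;>
    [rw [y_of_mod_four_eq_one hk3 h]; rw [y_of_mod_four_eq_two hk3 h];
      rw [y_of_mod_four_eq_three h]; rw [y_of_mod_four_eq_zero h]] <;>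
    fin_cases t <;> simp [symbolPos, α] <;> (try split_ifs) <;> omega

/-- Column `j` of the incidence matrices carries the symbol `α j = j + 3`; column `0` is `x₄`. -/
def symbolVec (m s : ℕ) : Fin m → ℚ := fun j => if s = (j : ℕ) + 3 then 1 else 0

def incidenceVec (m : ℕ) (p : Fin 4 → ℕ) : Fin m → ℚ :=
  fun j => if ∃ t, p t = (j : ℕ) + 3 then 1 else 0

lemma symbolVec_of_lt_three {m s : ℕ} (hs : s < 3) : symbolVec m s = 0 := by
  ext j
  simp only [symbolVec, Pi.zero_apply, ite_eq_right_iff]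
  omega

lemma incidenceVec_eq_sum {m : ℕ} {p : Fin 4 → ℕ} (hp : Injective p) :
    incidenceVec m p = ∑ t, symbolVec m (p t) := by
  ext j
  simp only [incidenceVec, symbolVec, Finset.sum_apply]
  split_ifs with h
  · obtain ⟨t₀, ht₀⟩ := h
    have : ∀ t, p t = (j : ℕ) + 3 ↔ t = t₀ := fun t => by rw [← ht₀, hp.eq_iff]
    simp [this]
  · simp only [not_exists] at h
    simp [h]

lemma isGood_range_of_linearIndependent {m : ℕ} {P : Fin m → Fin 4 → ℕ}
    (hP : ∀ r, Injective (P r)) (hli : LinearIndependent ℚ fun r => incidenceVec m (P r)) :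
    IsGood (Set.range P) := by
  intro f
  set M : Matrix (Fin m) (Fin m) ℂ := (Matrix.of fun r => incidenceVec m (P r)).map (↑)
  have hM : IsUnit M :=
    (Matrix.linearIndependent_rows_iff_isUnit.mp hli).map (Rat.castHom ℂ).mapMatrix
  obtain ⟨U, hU⟩ := Matrix.mulVec_surjective_iff_isUnit.mpr hM fun r => f (P r)
  refine ⟨fun _ s => ∑ j, (symbolVec m s j : ℂ) * U j, ?_⟩
  rintro _ ⟨r, rfl⟩
  rw [← congrFun hU r, Finset.sum_comm]
  simp [M, Matrix.mulVec, dotProduct, incidenceVec_eq_sum (hP r), Finset.sum_apply,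
    ← Finset.sum_mul]

lemma Sn_eq_range (N : ℕ) : Sn N = Set.range fun j : Fin N => y (j + 1) := by
  ext p
  simp only [Sn, Set.mem_image, Set.mem_Icc, Set.mem_range]
  constructor
  · rintro ⟨k, ⟨hk1, hkN⟩, rfl⟩
    exact ⟨⟨k - 1, by omega⟩, by simp [Nat.sub_add_cancel hk1]⟩
  · rintro ⟨j, rfl⟩
    exact ⟨j + 1, ⟨by omega, j.isLt⟩, rfl⟩


lemma injective_of_symbolPos {p : Fin 4 → ℕ} (h : ∀ t, symbolPos (p t) = t) : Injective p :=
  fun t t' htt' => Fin.ext (by rw [← h t, ← h t', htt'])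

lemma y_injective {k : ℕ} (hk : 1 ≤ k) : Injective (y k) :=
  injective_of_symbolPos (symbolPos_y hk)

section Incidence

variable {m : ℕ}

local notation "e" c => symbolVec m (α c)

lemma incidenceVec_y_one : incidenceVec m (y 1) = e 0 := by
  rw [incidenceVec_eq_sum (y_injective le_rfl), Fin.sum_univ_four]
  show symbolVec m 0 + symbolVec m 1 + symbolVec m 2 + (e 0) = e 0
  simp [symbolVec_of_lt_three]

lemma incidenceVec_y_two : incidenceVec m (y 2) = (e 1) + e 2 := by
  rw [incidenceVec_eq_sum (y_injective (by norm_num)), Fin.sum_univ_four]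
  show symbolVec m 0 + symbolVec m 1 + (e 1) + (e 2) = _
  simp [symbolVec_of_lt_three]

lemma incidenceVec_y_odd {t : ℕ} (ht : 1 ≤ t) :
    incidenceVec m (y (2 * t + 1)) = (e (2 * t)) + (e (2 * t + 1)) + e (2 * t + 2) := by
  rw [incidenceVec_eq_sum (y_injective (by omega)), Fin.sum_univ_four]
  rcases Nat.even_or_odd t with ⟨r, rfl⟩ | ⟨r, rfl⟩
  · rw [y_of_mod_four_eq_one (by omega) (by omega)]
    simp [symbolVec_of_lt_three]
  · rw [y_of_mod_four_eq_three (by omega)]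
    simp only [Matrix.cons_val, add_tsub_cancel_right, Nat.lt_add_one,
      symbolVec_of_lt_three, add_zero]
    abel

lemma incidenceVec_y_even {t : ℕ} (ht : 1 ≤ t) :
    incidenceVec m (y (2 * t + 2)) =
      (e (2 * t - 1)) + (e (2 * t + 1)) + (e (2 * t + 2)) + if Even t then 0 else e 0 := by
  rw [incidenceVec_eq_sum (y_injective (by omega)), Fin.sum_univ_four]
  rcases Nat.even_or_odd t with ⟨r, rfl⟩ | ⟨r, rfl⟩
  · rw [y_of_mod_four_eq_two (by omega) (by omega)]
    simp [symbolVec_of_lt_three]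
  · rw [y_of_mod_four_eq_zero (by omega)]
    simp only [Matrix.cons_val, α, Nat.add_one_sub_one, Nat.reduceSubDiff,
      Nat.not_even_bit1, ↓reduceIte, zero_add, add_left_inj]
    abel
def rowSpan (m N : ℕ) : Submodule ℚ (Fin m → ℚ) :=
  Submodule.span ℚ (Set.range fun j : Fin N => incidenceVec m (y (j + 1)))

lemma incidenceVec_y_mem_rowSpan {N k : ℕ} (hk1 : 1 ≤ k) (hkN : k ≤ N) :
    incidenceVec m (y k) ∈ rowSpan m N :=
  Submodule.subset_span ⟨⟨k - 1, by omega⟩, by simp [Nat.sub_add_cancel hk1]⟩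

lemma symbolVec_mem_rowSpan {N t : ℕ} (ht : 1 ≤ t) (htN : 2 * t ≤ N) :
    (∀ c ≤ 2 * t - 2, (e c) ∈ rowSpan m N) ∧ (e (2 * t - 1)) + (e (2 * t)) ∈ rowSpan m N := by
  induction t, ht using Nat.le_induction with
  | base =>
    refine ⟨fun c hc => ?_, ?_⟩
    · rw [show c = 0 by omega, ← incidenceVec_y_one]
      exact incidenceVec_y_mem_rowSpan le_rfl (by omega)
    · rw [← incidenceVec_y_two]
      exact incidenceVec_y_mem_rowSpan (by norm_num) htN
  | succ t ht ih =>
    obtain ⟨hsingle, hpair⟩ := ih (by omega)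
    have hodd : incidenceVec m (y (2 * t + 1)) ∈ rowSpan m N :=
      incidenceVec_y_mem_rowSpan (by omega) (by omega)
    have heven : incidenceVec m (y (2 * t + 2)) ∈ rowSpan m N :=
      incidenceVec_y_mem_rowSpan (by omega) (by omega)
    rw [incidenceVec_y_odd ht] at hodd
    rw [incidenceVec_y_even ht] at heven
    have hcorr : (if Even t then 0 else e 0) ∈ rowSpan m N := by
      split_ifs
      exacts [zero_mem _, hsingle 0 (Nat.zero_le _)]
    have hdiff : (e (2 * t)) - (e (2 * t - 1)) ∈ rowSpan m N := by
      convert add_mem (sub_mem hodd heven) hcorr using 1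
      abel
    have h2t : (e (2 * t)) ∈ rowSpan m N := by
      convert Submodule.smul_mem _ (2⁻¹ : ℚ) (add_mem hpair hdiff) using 1
      module
    have h2t1 : (e (2 * t - 1)) ∈ rowSpan m N := by
      convert sub_mem hpair h2t using 1
      abel
    refine ⟨fun c hc => ?_, ?_⟩
    · rcases (show c ≤ 2 * t - 2 ∨ c = 2 * t - 1 ∨ c = 2 * t by omega) with hc | rfl | rfl
      exacts [hsingle c hc, h2t1, h2t]
    · convert sub_mem hodd h2t using 1
      rw [show 2 * (t + 1) - 1 = 2 * t + 1 by omega, show 2 * (t + 1) = 2 * t + 2 by omega]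
      abel

end Incidence

lemma top_le_of_symbolVec_mem {m : ℕ} {S : Submodule ℚ (Fin m → ℚ)}
    (h : ∀ c < m, symbolVec m (α c) ∈ S) : ⊤ ≤ S := by
  rw [← (Pi.basisFun ℚ (Fin m)).span_eq, Submodule.span_le]
  rintro _ ⟨j, rfl⟩
  have hj : Pi.basisFun ℚ (Fin m) j = symbolVec m (α j) := by
    ext j'
    simp [symbolVec, α, Pi.single_apply, Fin.ext_iff, eq_comm]
  rw [SetLike.mem_coe, hj]
  exact h j j.isLt

lemma incidenceVec_update {m : ℕ} {p : Fin 4 → ℕ} {i : Fin 4} {s : ℕ} (hp : Injective p)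
    (hps : Injective (update p i s)) :
    incidenceVec m (update p i s) = incidenceVec m p - symbolVec m (p i) + symbolVec m s := by
  rw [incidenceVec_eq_sum hp, incidenceVec_eq_sum hps,
    Finset.sum_congr rfl fun t _ => apply_update (fun _ => symbolVec m) p i s t,
    Finset.sum_update_of_mem (Finset.mem_univ i),
    Finset.sum_eq_add_sum_sdiff_singleton_of_mem (Finset.mem_univ i)]
  abel

lemma y_le_alpha_of_le {k n : ℕ} (hk : 1 ≤ k) (hkn : k ≤ 2 * n) (t : Fin 4) :
    y k t ≤ α (2 * n) := by
  rcases (show k = 1 ∨ k = 2 ∨ 3 ≤ k by omega) with rfl | rfl | hk3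
  · fin_cases t <;> simp [y, α]
  · fin_cases t <;> simp [y, α] <;> omega
  rcases (show k % 4 = 1 ∨ k % 4 = 2 ∨ k % 4 = 3 ∨ k % 4 = 0 by omega) with h | h | h | h <;>
    [rw [y_of_mod_four_eq_one hk3 h]; rw [y_of_mod_four_eq_two hk3 h];
      rw [y_of_mod_four_eq_three h]; rw [y_of_mod_four_eq_zero h]] <;>
    fin_cases t <;> simp [α] <;> omega

section Replacement

variable {n K k : ℕ} {i : Fin 4}

lemma symbolPos_update_y (hK : 1 ≤ K) (hk : 1 ≤ k) (t : Fin 4) :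
    symbolPos (update (y K) i (y k i) t) = t := by
  rcases eq_or_ne t i with rfl | ht
  · simp [symbolPos_y hk]
  · simp [ht, symbolPos_y hK]

lemma symbolVec_replacement_mem_rowSpan (hK : 1 ≤ K) (hKi : y K i = α (2 * n)) (hk1 : 1 ≤ k)
    (hkn : k ≤ 2 * n) (hki : y k i ≠ α (2 * n)) :
    symbolVec (2 * n + 1) (y k i) ∈ rowSpan (2 * n + 1) (2 * n) := by
  have hn : 1 ≤ n := by omega
  have hle := y_le_alpha_of_le hk1 hkn i
  have hpos : symbolPos (y k i) = symbolPos (α (2 * n)) := by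
    rw [← hKi, symbolPos_y hK, symbolPos_y hk1]
  have hne : y k i ≠ α (2 * n - 1) := by
    intro h
    rw [h, symbolPos_alpha (by omega), symbolPos_alpha (by omega)] at hpos
    omega
  have hsingle := (symbolVec_mem_rowSpan (m := 2 * n + 1) hn le_rfl).1
  rcases lt_or_ge (y k i) 3 with hs | hs
  · rw [symbolVec_of_lt_three hs]
    exact zero_mem _
  · obtain ⟨c, hc⟩ : ∃ c, y k i = α c := ⟨y k i - 3, by simp only [α]; omega⟩
    rw [hc]
    exact hsingle c (by simp only [α] at hc hle hki hne; omega)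

lemma top_le_of_rowSpan_le {V : Submodule ℚ (Fin (2 * n + 1) → ℚ)}
    (hrows : rowSpan (2 * n + 1) (2 * n) ≤ V)
    (hv : incidenceVec (2 * n + 1) (update (y K) i (y k i)) ∈ V) (hK : 1 ≤ K) (hKn : K ≤ 2 * n)
    (hKi : y K i = α (2 * n)) (hk1 : 1 ≤ k) (hkn : k ≤ 2 * n) (hki : y k i ≠ α (2 * n)) :
    ⊤ ≤ V := by
  obtain ⟨hsingle, hpair⟩ := symbolVec_mem_rowSpan (m := 2 * n + 1) (t := n) (by omega) le_rfl
  have hupdate := incidenceVec_update (m := 2 * n + 1) (y_injective hK)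
    (injective_of_symbolPos (symbolPos_update_y (i := i) hK hk1))
  rw [hKi] at hupdate
  have h2n : symbolVec (2 * n + 1) (α (2 * n)) ∈ V := by
    convert add_mem (sub_mem (hrows (incidenceVec_y_mem_rowSpan hK hKn)) hv)
      (hrows (symbolVec_replacement_mem_rowSpan hK hKi hk1 hkn hki)) using 1
    rw [hupdate]
    abel
  have h2n1 : symbolVec (2 * n + 1) (α (2 * n - 1)) ∈ V := by
    convert sub_mem (hrows hpair) h2n using 1
    abel
  refine top_le_of_symbolVec_mem fun c hc => ?_
  rcases (show c ≤ 2 * n - 2 ∨ c = 2 * n - 1 ∨ c = 2 * n by omega) with hc | rfl | rfl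
  exacts [hrows (hsingle c hc), h2n1, h2n]

end Replacement

theorem stmt_18_general (n : ℕ) (w : Fin 4 → ℕ)
    (hw : w = y (2 * n - 1) ∨ w = y (2 * n)) (v : Fin 4 → ℕ)
    (hv : ∃ i : Fin 4, w i = α (2 * n) ∧ v i ≠ α (2 * n) ∧
      (∃ k, 1 ≤ k ∧ k ≤ 2 * n ∧ y k i = v i) ∧ ∀ j, j ≠ i → v j = w j) :
    IsGood (Sn (2 * n) ∪ {v}) ∧
    LinearIndependent ℚ (fun k : Fin (2 * n) => fun j : Fin (2 * n + 1) =>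
      if ∃ t, y ((k : ℕ) + 1) t = (j : ℕ) + 3 then (1 : ℚ) else 0) ∧
    (fun j : Fin (2 * n + 1) => if ∃ t, v t = (j : ℕ) + 3 then (1 : ℚ) else 0) ∉
      Submodule.span ℚ (Set.range (fun k : Fin (2 * n) => fun j : Fin (2 * n + 1) =>
        if ∃ t, y ((k : ℕ) + 1) t = (j : ℕ) + 3 then (1 : ℚ) else 0)) := by
  obtain ⟨i, hwi, hvi, ⟨k, hk1, hkn, hki⟩, hvw⟩ := hv
  obtain ⟨K, hK, hKn, rfl⟩ : ∃ K, 1 ≤ K ∧ K ≤ 2 * n ∧ w = y K := by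
    rcases hw with rfl | rfl
    exacts [⟨_, by omega, by omega, rfl⟩, ⟨_, by omega, le_rfl, rfl⟩]
  obtain rfl : v = update (y K) i (y k i) := by
    ext t
    rcases eq_or_ne t i with rfl | ht
    exacts [by simp [hki], by simp [ht, hvw t ht]]
  rw [← hki] at hvi
  have hspan : ⊤ ≤ Submodule.span ℚ (Set.range (Fin.snoc
      (fun j : Fin (2 * n) => incidenceVec (2 * n + 1) (y (j + 1)))
      (incidenceVec (2 * n + 1) (update (y K) i (y k i))))) := top_le_of_rowSpan_le
    (Submodule.span_mono (by rw [Fin.range_snoc]; exact Set.subset_insert _ _))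
    (Submodule.subset_span ⟨Fin.last _, Fin.snoc_last _ _⟩) hK hKn hwi hk1 hkn hvi
  have hli := linearIndependent_of_top_le_span_of_card_eq_finrank hspan (by simp)
  obtain ⟨hrows, hnotMem⟩ := linearIndependent_finSnoc.mp hli
  refine ⟨?_, hrows, hnotMem⟩
  rw [Sn_eq_range, Set.union_singleton, ← Fin.range_snoc]
  refine isGood_range_of_linearIndependent (Fin.lastCases ?_ fun j => ?_)
    (by convert hli using 1; exact Fin.comp_snoc (incidenceVec _) _ _)
  · rw [Fin.snoc_last]
    exact injective_of_symbolPos (symbolPos_update_y hK hk1)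
  · rw [Fin.snoc_castSucc]
    exact y_injective (by omega)

/-- for n ≥ 2, replacing in y_{2n} (or y_{2n−1}) the coordinate
equal to α_{2n} by another symbol occurring in the same coordinate position among
y₁,…,y_{2n} yields a point v such that S_{2n} ∪ {v} is good; equivalently the
(2n+1)×(2n+1) matrix with rows y₁,…,y_{2n},v and columns x₄,α₁,…,α_{2n}
(column j carries symbol j+3) has its first 2n rows linearly independent and its
last row outside their span. -/
theorem stmt_18 (n : ℕ) (hn : 2 ≤ n) (w : Fin 4 → ℕ)
    (hw : w = y (2 * n - 1) ∨ w = y (2 * n)) (v : Fin 4 → ℕ)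
    (hv : ∃ i : Fin 4, w i = α (2 * n) ∧ v i ≠ α (2 * n) ∧
      (∃ k, 1 ≤ k ∧ k ≤ 2 * n ∧ y k i = v i) ∧ ∀ j, j ≠ i → v j = w j) :
    IsGood (Sn (2 * n) ∪ {v}) ∧
    LinearIndependent ℚ (fun k : Fin (2 * n) => fun j : Fin (2 * n + 1) =>
      if ∃ t, y ((k : ℕ) + 1) t = (j : ℕ) + 3 then (1 : ℚ) else 0) ∧
    (fun j : Fin (2 * n + 1) => if ∃ t, v t = (j : ℕ) + 3 then (1 : ℚ) else 0) ∉
      Submodule.span ℚ (Set.range (fun k : Fin (2 * n) => fun j : Fin (2 * n + 1) =>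
        if ∃ t, y ((k : ℕ) + 1) t = (j : ℕ) + 3 then (1 : ℚ) else 0)) :=
  stmt_18_general n w hw v hv
end
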